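/- arXiv:2203.08229 — 5 statements merged into one kernel-verified Lean document; each statement's English description precedes it below -/
import Mathlib

section
/- Let X be a Banach space, let m ≥ 1, let ε > 0, and let e_1, …, e_m be vectors in the closed unit ball of X such that for every 1 ≤ j ≤ m one has ‖e_1 + ⋯ + e_j − e_{j+1} − ⋯ − e_m‖ ≥ m − ε. Then for all nonempty subsets A, B of {1, …, m} with max A < min B, one has ‖∑_{i ∈ A} e_i − ∑_{i ∈ B} e_i‖ ≥ |A| + |B| − ε. -/
open Finset

/-- **Lemma 1 (J-convexity consequence).**
If `e 1, …, e m` lie in the closed unit ball of a Banach space `X` and satisfy the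
J-convexity-failure condition `‖e 1 + ⋯ + e j − e (j+1) − ⋯ − e m‖ ≥ m − ε` for every `j`,
then for nonempty `A, B ⊆ {1,…,m}` with `max A < min B` we have
`‖∑_{i ∈ A} e i − ∑_{i ∈ B} e i‖ ≥ |A| + |B| − ε`. -/
theorem laakso_stmt0 {X : Type*} [NormedAddCommGroup X] [NormedSpace ℝ X] [CompleteSpace X]
    (m : ℕ) (hm : 1 ≤ m) (ε : ℝ) (hε : 0 < ε)
    (e : Fin m → X) (he : ∀ i, ‖e i‖ ≤ 1)
    (hJ : ∀ j : Fin m,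
      ‖(∑ i ∈ Finset.univ.filter (fun i => i ≤ j), e i)
        - ∑ i ∈ Finset.univ.filter (fun i => j < i), e i‖ ≥ (m : ℝ) - ε)
    (A B : Finset (Fin m)) (hA : A.Nonempty) (hB : B.Nonempty)
    (hAB : ∀ i ∈ A, ∀ j ∈ B, i < j) :
    ‖(∑ i ∈ A, e i) - ∑ i ∈ B, e i‖ ≥ (A.card : ℝ) + (B.card : ℝ) - ε := by
  classical
  set j := A.max' hA with hj
  have hjA : j ∈ A := A.max'_mem hA
  set P := Finset.univ.filter (fun i : Fin m => i ≤ j) with hP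
  set Q := Finset.univ.filter (fun i : Fin m => j < i) with hQ
  have hAP : A ⊆ P := fun a ha => by
    simp only [hP, mem_filter, mem_univ, true_and]
    exact A.le_max' a ha
  have hBQ : B ⊆ Q := fun b hb => by
    simp only [hQ, mem_filter, mem_univ, true_and]
    exact hAB j hjA b hb
  have hcard : P.card + Q.card = m := by
    have : Q = Finset.univ.filter (fun i : Fin m => ¬ i ≤ j) := by
      apply Finset.filter_congr
      intro i _
      simp [not_le]
    rw [this, Finset.card_filter_add_card_filter_not]
    · simp
  have hsplitA : ∑ i ∈ P, e i = (∑ i ∈ A, e i) + ∑ i ∈ P \ A, e i := by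
    rw [← Finset.sum_union (Finset.disjoint_sdiff), Finset.union_sdiff_of_subset hAP]
  have hsplitB : ∑ i ∈ Q, e i = (∑ i ∈ B, e i) + ∑ i ∈ Q \ B, e i := by
    rw [← Finset.sum_union (Finset.disjoint_sdiff), Finset.union_sdiff_of_subset hBQ]
  have hnorm : ∀ T : Finset (Fin m), ‖∑ i ∈ T, e i‖ ≤ (T.card : ℝ) := by
    intro T
    calc ‖∑ i ∈ T, e i‖ ≤ ∑ i ∈ T, (1 : ℝ) :=
          norm_sum_le_of_le T (fun i _ => he i)
      _ = T.card := by simp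
  have hD : ‖(∑ i ∈ P \ A, e i) - ∑ i ∈ Q \ B, e i‖
      ≤ ((P \ A).card : ℝ) + ((Q \ B).card : ℝ) := by
    calc ‖(∑ i ∈ P \ A, e i) - ∑ i ∈ Q \ B, e i‖
        ≤ ‖∑ i ∈ P \ A, e i‖ + ‖∑ i ∈ Q \ B, e i‖ := norm_sub_le _ _
      _ ≤ _ := add_le_add (hnorm _) (hnorm _)
  have hcardPA : (P \ A).card = P.card - A.card := Finset.card_sdiff_of_subset hAP
  have hcardQB : (Q \ B).card = Q.card - B.card := Finset.card_sdiff_of_subset hBQ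
  have hAle : A.card ≤ P.card := Finset.card_le_card hAP
  have hBle : B.card ≤ Q.card := Finset.card_le_card hBQ
  have hJj := hJ j
  have key : ‖(∑ i ∈ P, e i) - ∑ i ∈ Q, e i‖
      ≤ ‖(∑ i ∈ A, e i) - ∑ i ∈ B, e i‖
        + ‖(∑ i ∈ P \ A, e i) - ∑ i ∈ Q \ B, e i‖ := by
    have : (∑ i ∈ P, e i) - ∑ i ∈ Q, e i
        = ((∑ i ∈ A, e i) - ∑ i ∈ B, e i)
          + ((∑ i ∈ P \ A, e i) - ∑ i ∈ Q \ B, e i) := by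
      rw [hsplitA, hsplitB]; abel
    rw [this]
    exact norm_add_le _ _
  have hPA : ((P \ A).card : ℝ) = (P.card : ℝ) - A.card := by
    rw [hcardPA, Nat.cast_sub hAle]
  have hQB : ((Q \ B).card : ℝ) = (Q.card : ℝ) - B.card := by
    rw [hcardQB, Nat.cast_sub hBle]
  have hm' : (P.card : ℝ) + Q.card = m := by exact_mod_cast hcard
  have : (m : ℝ) - ε ≤ ‖(∑ i ∈ A, e i) - ∑ i ∈ B, e i‖
      + (((P.card : ℝ) - A.card) + ((Q.card : ℝ) - B.card)) := by
    calc (m : ℝ) - ε ≤ ‖(∑ i ∈ P, e i) - ∑ i ∈ Q, e i‖ := hJj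
      _ ≤ _ := by
        refine le_trans key (add_le_add_right ?_ _)
        rw [← hPA, ← hQB]; exact hD
  linarith
end

section
/- Let X be a Banach space, let m ≥ 1, let ε > 0, and let e_1, …, e_m be vectors in the closed unit ball of X such that for every 1 ≤ j ≤ m one has ‖e_1 + ⋯ + e_j − e_{j+1} − ⋯ − e_m‖ ≥ m − ε. Let A, B be disjoint nonempty subsets of {1, …, m} such that either max A < min B or max B < min A, and let ε_i ∈ {1, −1} for each i ∈ A. Then ‖∑_{i ∈ A} ε_i e_i + ∑_{i ∈ B} e_i‖ ≥ |B| − ε. -/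
open Finset


lemma norming_lemma {X : Type*} [NormedAddCommGroup X] [NormedSpace ℝ X]
    (m : ℕ) (ε : ℝ) (e : Fin m → X)
    (hJ : ∀ j : Fin m,
      ‖(∑ i ∈ Finset.univ.filter (fun i => i ≤ j), e i)
        - ∑ i ∈ Finset.univ.filter (fun i => j < i), e i‖ ≥ (m : ℝ) - ε)
    (hme : ε < (m:ℝ)) (j : Fin m) :
    ∃ f : X →L[ℝ] ℝ, ‖f‖ ≤ 1 ∧
      (m:ℝ) - ε ≤ ∑ i, (if i ≤ j then (1:ℝ) else -1) * f (e i) := by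
  set x := (∑ i ∈ Finset.univ.filter (fun i => i ≤ j), e i)
        - ∑ i ∈ Finset.univ.filter (fun i => j < i), e i with hxdef
  have hx : (m:ℝ) - ε ≤ ‖x‖ := hJ j
  have hx0 : x ≠ 0 := by
    intro h0; rw [h0, norm_zero] at hx; linarith
  obtain ⟨f, hf1, hfx⟩ := exists_dual_vector ℝ x (norm_ne_zero_iff.mpr hx0)
  refine ⟨f, hf1.le, ?_⟩
  have hsum : f x = ∑ i, (if i ≤ j then (1:ℝ) else -1) * f (e i) := by
    rw [hxdef, map_sub, map_sum, map_sum]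
    rw [← Finset.sum_filter_add_sum_filter_not Finset.univ (fun i => i ≤ j)
      (fun i => (if i ≤ j then (1:ℝ) else -1) * f (e i))]
    have h2 : Finset.univ.filter (fun i : Fin m => j < i)
        = Finset.univ.filter (fun i : Fin m => ¬ i ≤ j) := by
      ext i
      simp only [Finset.mem_filter, Finset.mem_univ, true_and]
      exact not_le.symm
    rw [h2, sub_eq_add_neg, ← Finset.sum_neg_distrib]
    congr 1
    · refine Finset.sum_congr rfl ?_
      intro i hi
      rw [if_pos (Finset.mem_filter.mp hi).2, one_mul]
    · refine Finset.sum_congr rfl ?_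
      intro i hi
      rw [if_neg (Finset.mem_filter.mp hi).2]; ring
  rw [← hsum]
  rw [hfx]
  exact hx

lemma delta_facts {X : Type*} [NormedAddCommGroup X] [NormedSpace ℝ X]
    (m : ℕ) (ε : ℝ) (e : Fin m → X) (he : ∀ i, ‖e i‖ ≤ 1)
    (f : X →L[ℝ] ℝ) (hf : ‖f‖ ≤ 1) (j : Fin m)
    (hfs : (m:ℝ) - ε ≤ ∑ i, (if i ≤ j then (1:ℝ) else -1) * f (e i)) :
    (∀ i, 0 ≤ 1 - (if i ≤ j then (1:ℝ) else -1) * f (e i)) ∧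
      ∑ i, (1 - (if i ≤ j then (1:ℝ) else -1) * f (e i)) ≤ ε := by
  have habs : ∀ i, |f (e i)| ≤ 1 := by
    intro i
    have h1 : ‖f (e i)‖ ≤ ‖f‖ * ‖e i‖ := f.le_opNorm (e i)
    rw [Real.norm_eq_abs] at h1
    nlinarith [norm_nonneg (e i), he i, abs_nonneg (f (e i))]
  constructor
  · intro i
    have := abs_le.mp (habs i)
    split_ifs <;> nlinarith
  · rw [Finset.sum_sub_distrib]
    simp only [Finset.sum_const, Finset.card_univ, Fintype.card_fin, nsmul_eq_mul, mul_one]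
    linarith

lemma final_lemma {X : Type*} [NormedAddCommGroup X] [NormedSpace ℝ X]
    (m : ℕ) (ε : ℝ) (e : Fin m → X)
    (A B : Finset (Fin m)) (hdisj : Disjoint A B)
    (sgn : Fin m → ℝ) (hsgn : ∀ i ∈ A, sgn i = 1 ∨ sgn i = -1)
    (h : X →L[ℝ] ℝ) (hh : ‖h‖ ≤ 1)
    (d : Fin m → ℝ) (hd0 : ∀ i, 0 ≤ d i)
    (hdB : ∀ i ∈ B, 1 - d i ≤ h (e i))
    (hdA : ∀ i ∈ A, |h (e i)| ≤ d i)
    (hdsum : ∑ i, d i ≤ ε) :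
    (B.card : ℝ) - ε ≤ ‖(∑ i ∈ A, sgn i • e i) + ∑ i ∈ B, e i‖ := by
  set v := (∑ i ∈ A, sgn i • e i) + ∑ i ∈ B, e i with hv
  have hval : h v = (∑ i ∈ A, sgn i * h (e i)) + ∑ i ∈ B, h (e i) := by
    simp [hv, map_add, map_sum, map_smul, smul_eq_mul]
  have hAbound : ∀ i ∈ A, -(d i) ≤ sgn i * h (e i) := by
    intro i hi
    have h1 : |sgn i * h (e i)| ≤ d i := by
      rw [abs_mul]
      rcases hsgn i hi with hs | hs <;> rw [hs] <;> simpa using hdA i hi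
    linarith [neg_abs_le (sgn i * h (e i))]
  have h2 : (∑ i ∈ A, -(d i)) + ∑ i ∈ B, (1 - d i) ≤ h v := by
    rw [hval]
    exact add_le_add (Finset.sum_le_sum hAbound) (Finset.sum_le_sum hdB)
  have h3 : ∑ i ∈ A, d i + ∑ i ∈ B, d i ≤ ε := by
    rw [← Finset.sum_union hdisj]
    exact le_trans (Finset.sum_le_sum_of_subset_of_nonneg (Finset.subset_univ _)
      (fun i _ _ => hd0 i)) hdsum
  have h4 : (B.card : ℝ) - ε ≤ h v := by
    have hBs : ∑ i ∈ B, ((1:ℝ) - d i) = B.card - ∑ i ∈ B, d i := by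
      rw [Finset.sum_sub_distrib]
      simp
    have hAs : ∑ i ∈ A, -(d i) = -∑ i ∈ A, d i := by
      rw [Finset.sum_neg_distrib]
    rw [hBs, hAs] at h2
    linarith
  have h5 : h v ≤ ‖v‖ := by
    have := h.le_opNorm v
    have h6 : h v ≤ |h v| := le_abs_self _
    rw [← Real.norm_eq_abs] at h6
    nlinarith [norm_nonneg v]
  linarith

lemma avg_sum_le {n : ℕ} (ε : ℝ) (a b : Fin n → ℝ)
    (ha : ∑ i, a i ≤ ε) (hb : ∑ i, b i ≤ ε) :
    ∑ i, (a i + b i) / 2 ≤ ε := by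
  have h1 : ∑ i, (a i + b i) / 2 = (∑ i, a i + ∑ i, b i) / 2 := by
    rw [← Finset.sum_add_distrib, Finset.sum_div]
  rw [h1]; linarith

lemma half_norm {X : Type*} [NormedAddCommGroup X] [NormedSpace ℝ X]
    (f1 f2 h : X →L[ℝ] ℝ) (hf1 : ‖f1‖ ≤ 1) (hf2 : ‖f2‖ ≤ 1)
    (happ : ∀ y : X, |h y| ≤ 2⁻¹ * (|f1 y| + |f2 y|)) : ‖h‖ ≤ 1 := by
  refine h.opNorm_le_bound (by norm_num) ?_
  intro x
  have b1 : ‖f1 x‖ ≤ ‖x‖ := by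
    have := f1.le_opNorm x; nlinarith [norm_nonneg x]
  have b2 : ‖f2 x‖ ≤ ‖x‖ := by
    have := f2.le_opNorm x; nlinarith [norm_nonneg x]
  rw [Real.norm_eq_abs] at b1 b2 ⊢
  have := happ x
  linarith

/-- **Lemma 2 (J-convexity consequence with signs).**
If `e 1, …, e m` lie in the closed unit ball of a Banach space `X` and satisfy the
J-convexity-failure condition, and `A, B` are disjoint nonempty subsets of `{1,…,m}` with
`max A < min B` or `max B < min A`, then for any signs `ε i = ±1` (for `i ∈ A`) we have
`‖∑_{i ∈ A} ε i • e i + ∑_{i ∈ B} e i‖ ≥ |B| − ε`. -/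
theorem laakso_stmt1 {X : Type*} [NormedAddCommGroup X] [NormedSpace ℝ X] [CompleteSpace X]
    (m : ℕ) (hm : 1 ≤ m) (ε : ℝ) (hε : 0 < ε)
    (e : Fin m → X) (he : ∀ i, ‖e i‖ ≤ 1)
    (hJ : ∀ j : Fin m,
      ‖(∑ i ∈ Finset.univ.filter (fun i => i ≤ j), e i)
        - ∑ i ∈ Finset.univ.filter (fun i => j < i), e i‖ ≥ (m : ℝ) - ε)
    (A B : Finset (Fin m)) (hA : A.Nonempty) (hB : B.Nonempty) (hdisj : Disjoint A B)
    (hAB : (∀ i ∈ A, ∀ j ∈ B, i < j) ∨ (∀ i ∈ B, ∀ j ∈ A, i < j))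
    (sgn : Fin m → ℝ) (hsgn : ∀ i ∈ A, sgn i = 1 ∨ sgn i = -1) :
    ‖(∑ i ∈ A, sgn i • e i) + ∑ i ∈ B, e i‖ ≥ (B.card : ℝ) - ε := by
  rcases le_or_gt (m:ℝ) ε with hme | hme
  · have hBm : (B.card : ℝ) ≤ m := by
      have h1 := Finset.card_le_card (Finset.subset_univ B)
      rw [Finset.card_univ, Fintype.card_fin] at h1
      exact_mod_cast h1
    have := norm_nonneg ((∑ i ∈ A, sgn i • e i) + ∑ i ∈ B, e i)
    linarith
  have hABne : (A ∪ B).Nonempty := hA.mono Finset.subset_union_left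
  obtain ⟨f2, hf2n, hf2s⟩ := norming_lemma m ε e hJ hme ((A ∪ B).max' hABne)
  obtain ⟨hδ2pos, hδ2sum⟩ :=
    delta_facts m ε e he f2 hf2n ((A ∪ B).max' hABne) hf2s
  rcases hAB with hcase | hcase
  · -- A before B : h = ½(f2 - f1) with f1 at j1 = max A
    obtain ⟨f1, hf1n, hf1s⟩ := norming_lemma m ε e hJ hme (A.max' hA)
    obtain ⟨hδ1pos, hδ1sum⟩ := delta_facts m ε e he f1 hf1n (A.max' hA) hf1s
    have happ : ∀ y : X, ((2⁻¹ : ℝ) • (f2 - f1)) y = 2⁻¹ * (f2 y - f1 y) := by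
      intro y; simp [smul_eq_mul]
    have hhn : ‖(2⁻¹ : ℝ) • (f2 - f1)‖ ≤ 1 := by
      refine half_norm f1 f2 _ hf1n hf2n ?_
      intro y
      rw [happ y]
      have htri : |f2 y - f1 y| ≤ |f2 y| + |f1 y| := by
        have := abs_add_le (f2 y) (-(f1 y)); simpa [sub_eq_add_neg] using this
      rw [abs_mul]
      rw [show |(2⁻¹ : ℝ)| = 2⁻¹ by norm_num]
      linarith
    refine final_lemma m ε e A B hdisj sgn hsgn _ hhn
      (fun i => ((1 - (if i ≤ A.max' hA then (1:ℝ) else -1) * f1 (e i))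
        + (1 - (if i ≤ (A ∪ B).max' hABne then (1:ℝ) else -1) * f2 (e i))) / 2)
      (fun i => by have p1 := hδ1pos i; have p2 := hδ2pos i; linarith) ?_ ?_ ?_
    · intro i hi
      have hij2 : i ≤ (A ∪ B).max' hABne :=
        Finset.le_max' _ i (Finset.mem_union_right A hi)
      have hij1 : ¬ i ≤ A.max' hA :=
        not_le.mpr (hcase (A.max' hA) (Finset.max'_mem A hA) i hi)
      rw [happ]
      simp only [if_neg hij1, if_pos hij2]
      linarith
    · intro i hi
      have hij2 : i ≤ (A ∪ B).max' hABne :=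
        Finset.le_max' _ i (Finset.mem_union_left B hi)
      have hij1 : i ≤ A.max' hA := Finset.le_max' _ i hi
      have p1 := hδ1pos i; have p2 := hδ2pos i
      rw [if_pos hij1] at p1; rw [if_pos hij2] at p2
      rw [happ, abs_le]
      simp only [if_pos hij1, if_pos hij2]
      constructor <;> linarith
    · exact avg_sum_le ε _ _ hδ1sum hδ2sum
  · -- B before A : h = ½(f2 + f1) with f1 at j1 = max B
    obtain ⟨f1, hf1n, hf1s⟩ := norming_lemma m ε e hJ hme (B.max' hB)
    obtain ⟨hδ1pos, hδ1sum⟩ := delta_facts m ε e he f1 hf1n (B.max' hB) hf1s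
    have happ : ∀ y : X, ((2⁻¹ : ℝ) • (f2 + f1)) y = 2⁻¹ * (f2 y + f1 y) := by
      intro y; simp [smul_eq_mul]; ring
    have hhn : ‖(2⁻¹ : ℝ) • (f2 + f1)‖ ≤ 1 := by
      refine half_norm f1 f2 _ hf1n hf2n ?_
      intro y
      rw [happ y]
      have htri : |f2 y + f1 y| ≤ |f2 y| + |f1 y| := abs_add_le _ _
      rw [abs_mul]
      rw [show |(2⁻¹ : ℝ)| = 2⁻¹ by norm_num]
      linarith
    refine final_lemma m ε e A B hdisj sgn hsgn _ hhn
      (fun i => ((1 - (if i ≤ B.max' hB then (1:ℝ) else -1) * f1 (e i))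
        + (1 - (if i ≤ (A ∪ B).max' hABne then (1:ℝ) else -1) * f2 (e i))) / 2)
      (fun i => by have p1 := hδ1pos i; have p2 := hδ2pos i; linarith) ?_ ?_ ?_
    · intro i hi
      have hij2 : i ≤ (A ∪ B).max' hABne :=
        Finset.le_max' _ i (Finset.mem_union_right A hi)
      have hij1 : i ≤ B.max' hB := Finset.le_max' _ i hi
      rw [happ]
      simp only [if_pos hij1, if_pos hij2]
      linarith
    · intro i hi
      have hij2 : i ≤ (A ∪ B).max' hABne :=
        Finset.le_max' _ i (Finset.mem_union_left B hi)
      have hij1 : ¬ i ≤ B.max' hB :=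
        not_le.mpr (hcase (B.max' hB) (Finset.max'_mem B hB) i hi)
      have p1 := hδ1pos i; have p2 := hδ2pos i
      rw [if_neg hij1] at p1; rw [if_pos hij2] at p2
      rw [happ, abs_le]
      simp only [if_neg hij1, if_pos hij2]
      constructor <;> linarith
    · exact avg_sum_le ε _ _ hδ1sum hδ2sum
end

section
/- Let X be a Banach space with the property that for every m ≥ 1 and every ε > 0 there exist vectors e_1, …, e_m in the closed unit ball of X such that ‖e_1 + ⋯ + e_j − e_{j+1} − ⋯ − e_m‖ ≥ m − ε for every 1 ≤ j ≤ m. Then for each ε > 0 and each n ≥ 1 there exists a mapping f_n from the vertex set of the Laakso graph 𝓛_n into X such that for all vertices a, b of 𝓛_n: (1/2)·d(a,b) − ε ≤ ‖f_n(a) − f_n(b)‖ ≤ d(a,b), where d is the shortest-path metric on 𝓛_n. -/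
/-- A graph presented by an (oriented) edge family with source and target maps. -/
structure PreGraph where
  V : Type
  E : Type
  s : E → V
  t : E → V

/-- Replace every edge `uv` of `G` by a copy of the six-vertex Laakso gadget `𝓛₁`
with vertices `u = A, T, L, R, B, U = v` and edges `AT, TL, TR, LB, RB, BU`.
The four new internal vertices per edge are indexed by `Fin 4` as `0 = T`,
`1 = L`, `2 = R`, `3 = B`. -/
def laaksoStep (G : PreGraph) : PreGraph where
  V := G.V ⊕ (G.E × Fin 4)
  E := G.E × Fin 6
  s := fun p => ![Sum.inl (G.s p.1), Sum.inr (p.1, 0), Sum.inr (p.1, 0),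
                  Sum.inr (p.1, 1), Sum.inr (p.1, 2), Sum.inr (p.1, 3)] p.2
  t := fun p => ![Sum.inr (p.1, 0), Sum.inr (p.1, 1), Sum.inr (p.1, 2),
                  Sum.inr (p.1, 3), Sum.inr (p.1, 3), Sum.inl (G.t p.1)] p.2

/-- The Laakso graph `𝓛ₙ`: `𝓛₀` is a single edge, and `𝓛ₙ` is obtained from
`𝓛ₙ₋₁` by replacing each edge by a copy of the gadget `𝓛₁`. -/
def laaksoPre : ℕ → PreGraph
  | 0 => ⟨Fin 2, Fin 1, fun _ => 0, fun _ => 1⟩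
  | n + 1 => laaksoStep (laaksoPre n)

/-- The Laakso graph `𝓛ₙ` as a simple graph on its vertex set. -/
def laaksoGraph (n : ℕ) : SimpleGraph (laaksoPre n).V :=
  SimpleGraph.fromRel (fun u v => ∃ e, (laaksoPre n).s e = u ∧ (laaksoPre n).t e = v)

/-- The shortest-path metric on the Laakso graph `𝓛ₙ`, as a real number. -/
noncomputable def laaksoDist (n : ℕ) (a b : (laaksoPre n).V) : ℝ :=
  ((laaksoGraph n).dist a b : ℝ)

open Finset

namespace Laakso

open SimpleGraph

abbrev gd : Fin 6 → ℕ := ![0,1,2,2,1,3]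
abbrev eS : Fin 4 → Finset ℕ := ![{0},{0,1},{0,2},{0,1,2}]

def blow (s : Finset ℕ) : Finset ℕ := s.biUnion fun i => Finset.Ico (4*i) (4*i+4)

def shf (off : ℕ) (s : Finset ℕ) : Finset ℕ := s.image (off + ·)

def stepI (G : PreGraph) (ι : G.E → ℕ) : (laaksoStep G).E → ℕ :=
  fun p => 4 * ι p.1 + gd p.2

def lI : ∀ n, (laaksoPre n).E → ℕ
  | 0 => fun _ => 0
  | n+1 => stepI (laaksoPre n) (lI n)

def stepS (G : PreGraph) (S : G.V → Finset ℕ) (ι : G.E → ℕ) : (laaksoStep G).V → Finset ℕ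
  | Sum.inl a => blow (S a)
  | Sum.inr (e,k) => blow (S (G.s e)) ∪ shf (4 * ι e) (eS k)

def lS : ∀ n, (laaksoPre n).V → Finset ℕ
  | 0 => fun v => if (show Fin 2 from v) = 0 then ∅ else {0}
  | n+1 => stepS (laaksoPre n) (lS n) (lI n)

def bot : ∀ n, (laaksoPre n).V
  | 0 => show Fin 2 from 0
  | n+1 => Sum.inl (bot n)

def topv : ∀ n, (laaksoPre n).V
  | 0 => show Fin 2 from 1
  | n+1 => Sum.inl (topv n)

def Λ : ∀ n, Fin 6 → (laaksoPre n).E → (laaksoPre (n+1)).E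
  | 0, k, _ => ((0 : Fin 1), k)
  | n+1, k, e => ((Λ n k e.1, e.2) : (laaksoStep (laaksoPre n)).E × Fin 6)

def κ : ∀ n, Fin 6 → (laaksoPre n).V → (laaksoPre (n+1)).V
  | 0, k, v => if (show Fin 2 from v) = 0 then (laaksoPre 1).s ((0:Fin 1), k) else (laaksoPre 1).t ((0:Fin 1), k)
  | n+1, k, v => match v with
    | Sum.inl a => Sum.inl (κ n k a)
    | Sum.inr (e, j) => Sum.inr (Λ n k e, j)

def gg (J : ℕ) (S : Finset ℕ) : ℤ := 2 * ((S.filter (· < J)).card : ℤ) - S.card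

def Φ (J : ℕ) (X Y : Finset ℕ) : ℤ := gg J X - gg J Y

-- basic simp lemmas
@[simp] lemma lS_inl (n : ℕ) (a : (laaksoPre n).V) :
    lS (n+1) (Sum.inl a) = blow (lS n a) := rfl

@[simp] lemma lS_inr (n : ℕ) (e : (laaksoPre n).E) (k : Fin 4) :
    lS (n+1) (Sum.inr (e,k)) = blow (lS n ((laaksoPre n).s e)) ∪ shf (4 * lI n e) (eS k) := rfl

@[simp] lemma mem_blow {x : ℕ} {s : Finset ℕ} : x ∈ blow s ↔ x / 4 ∈ s := by
  simp only [blow, Finset.mem_biUnion, Finset.mem_Ico]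
  constructor
  · rintro ⟨i, hi, h1, h2⟩
    have : x / 4 = i := by omega
    rwa [this]
  · intro h; exact ⟨x / 4, h, by omega⟩

@[simp] lemma mem_shf {x off : ℕ} {s : Finset ℕ} : x ∈ shf off s ↔ off ≤ x ∧ x - off ∈ s := by
  simp only [shf, Finset.mem_image]
  constructor
  · rintro ⟨y, hy, rfl⟩; constructor; omega; simpa using hy
  · rintro ⟨h1, h2⟩; exact ⟨x - off, h2, by omega⟩

lemma blow_union (s t : Finset ℕ) : blow (s ∪ t) = blow s ∪ blow t := by
  ext x; simp [or_and_right]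

lemma blow_empty : blow ∅ = ∅ := rfl

lemma card_blow (s : Finset ℕ) : (blow s).card = 4 * s.card := by
  rw [blow, Finset.card_biUnion]
  · simp [Nat.Ico_eq_range', mul_comm]
  · intro a _ b _ hab
    simp only [Finset.disjoint_left, Finset.mem_Ico]
    intro x h1 h2; omega

lemma card_shf (off : ℕ) (s : Finset ℕ) : (shf off s).card = s.card :=
  Finset.card_image_of_injective _ (fun a b => by omega)

lemma blow_Ico (a b : ℕ) : blow (Finset.Ico a b) = Finset.Ico (4*a) (4*b) := by
  ext x
  simp only [mem_blow, Finset.mem_Ico]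
  omega

lemma blow_shf (off : ℕ) (s : Finset ℕ) : blow (shf off s) = shf (4*off) (blow s) := by
  ext x; simp only [mem_blow, mem_shf]
  constructor
  · rintro ⟨h1, h2⟩; constructor; omega
    have : (x - 4 * off) / 4 = x / 4 - off := by omega
    rw [this]; exact h2
  · rintro ⟨h1, h2⟩; constructor; omega
    have : x / 4 - off = (x - 4 * off) / 4 := by omega
    rw [this]; exact h2


-- s/t computation lemmas
section st
variable (n : ℕ) (e : (laaksoPre n).E)

@[simp] lemma sE0 : (laaksoPre (n+1)).s (e,0) = Sum.inl ((laaksoPre n).s e) := rfl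
@[simp] lemma tE0 : (laaksoPre (n+1)).t (e,0) = Sum.inr (e,0) := rfl
@[simp] lemma sE1 : (laaksoPre (n+1)).s (e,1) = Sum.inr (e,0) := rfl
@[simp] lemma tE1 : (laaksoPre (n+1)).t (e,1) = Sum.inr (e,1) := rfl
@[simp] lemma sE2 : (laaksoPre (n+1)).s (e,2) = Sum.inr (e,0) := rfl
@[simp] lemma tE2 : (laaksoPre (n+1)).t (e,2) = Sum.inr (e,2) := rfl
@[simp] lemma sE3 : (laaksoPre (n+1)).s (e,3) = Sum.inr (e,1) := rfl
@[simp] lemma tE3 : (laaksoPre (n+1)).t (e,3) = Sum.inr (e,3) := rfl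
@[simp] lemma sE4 : (laaksoPre (n+1)).s (e,4) = Sum.inr (e,2) := rfl
@[simp] lemma tE4 : (laaksoPre (n+1)).t (e,4) = Sum.inr (e,3) := rfl
@[simp] lemma sE5 : (laaksoPre (n+1)).s (e,5) = Sum.inr (e,3) := rfl
@[simp] lemma tE5 : (laaksoPre (n+1)).t (e,5) = Sum.inl ((laaksoPre n).t e) := rfl

@[simp] lemma lI_succ (k : Fin 6) : lI (n+1) (e,k) = 4 * lI n e + gd k := rfl

end st

@[simp] lemma gd0 : gd 0 = 0 := rfl
@[simp] lemma gd1 : gd 1 = 1 := rfl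
@[simp] lemma gd2 : gd 2 = 2 := rfl
@[simp] lemma gd3 : gd 3 = 2 := rfl
@[simp] lemma gd4 : gd 4 = 1 := rfl
@[simp] lemma gd5 : gd 5 = 3 := rfl

lemma gd_lt (k : Fin 6) : gd k < 4 := by fin_cases k <;> decide

@[simp] lemma shfe0 (o : ℕ) : shf o (eS 0) = {o} := by
  ext x; simp only [mem_shf]; simp [eS]; omega
@[simp] lemma shfe1 (o : ℕ) : shf o (eS 1) = {o, o+1} := by
  ext x; simp only [mem_shf]; simp [eS]; omega
@[simp] lemma shfe2 (o : ℕ) : shf o (eS 2) = {o, o+2} := by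
  ext x; simp only [mem_shf]; simp [eS]; omega
@[simp] lemma shfe3 (o : ℕ) : shf o (eS 3) = {o, o+1, o+2} := by
  ext x; simp only [mem_shf]; simp [eS]; omega

lemma blow_singleton (i : ℕ) : blow {i} = Finset.Ico (4*i) (4*i+4) := by
  simp [blow]

lemma blow_insert (i : ℕ) (s : Finset ℕ) :
    blow (insert i s) = Finset.Ico (4*i) (4*i+4) ∪ blow s := by
  rw [Finset.insert_eq, blow_union, blow_singleton]

lemma lI_lt : ∀ n (e : (laaksoPre n).E), lI n e < 4^n
  | 0, _ => Nat.one_pos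
  | n+1, (e,k) => by
    have h1 := lI_lt n e
    have h2 := gd_lt k
    simp only [lI_succ]
    have : 4^(n+1) = 4 * 4^n := by ring
    omega

lemma lS_subset : ∀ n (v : (laaksoPre n).V), lS n v ⊆ Finset.range (4^n) := by
  intro n
  induction n with
  | zero =>
    intro v
    by_cases h : (show Fin 2 from v) = 0 <;>
      simp [lS, h, Finset.singleton_subset_iff]
  | succ n ih =>
    intro v
    match v with
    | Sum.inl a =>
      intro x hx
      simp only [lS_inl, mem_blow] at hx
      have := ih a hx
      simp only [Finset.mem_range] at *
      have h4 : 4^(n+1) = 4 * 4^n := by ring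
      omega
    | Sum.inr (e,k) =>
      intro x hx
      simp only [lS_inr, Finset.mem_union, mem_blow, mem_shf] at hx
      simp only [Finset.mem_range]
      have h4 : 4^(n+1) = 4 * 4^n := by ring
      rcases hx with hx | ⟨h1, h2⟩
      · have := ih ((laaksoPre n).s e) hx
        simp only [Finset.mem_range] at this
        omega
      · have he := lI_lt n e
        have h3 : x - 4 * lI n e < 4 := by
          have hr : eS k ⊆ Finset.range 4 := by fin_cases k <;> decide
          have := hr h2
          simp only [Finset.mem_range] at this
          omega
        omega

section edgestep
variable {n : ℕ} {e : (laaksoPre n).E}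

private lemma hfresh (ihm : lI n e ∉ lS n ((laaksoPre n).s e)) :
    ∀ x, 4 * lI n e ≤ x → x < 4 * lI n e + 4 → x ∉ blow (lS n ((laaksoPre n).s e)) := by
  intro x h1 h2 h
  rw [mem_blow] at h
  have : x / 4 = lI n e := by omega
  rw [this] at h
  exact ihm h

private lemma es0 (ihm : lI n e ∉ lS n ((laaksoPre n).s e)) : lI (n+1) (e,0) ∉ lS (n+1) ((laaksoPre (n+1)).s (e,0)) ∧
    lS (n+1) ((laaksoPre (n+1)).t (e,0)) = insert (lI (n+1) (e,0)) (lS (n+1) ((laaksoPre (n+1)).s (e,0))) := by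
  simp only [sE0, tE0, lS_inl, lS_inr, lI_succ, gd0, shfe0]
  constructor
  · exact hfresh ihm _ (by omega) (by omega)
  · ext x
    by_cases hb : x ∈ blow (lS n ((laaksoPre n).s e)) <;> simp [hb] <;> omega

private lemma es1 (ihm : lI n e ∉ lS n ((laaksoPre n).s e)) : lI (n+1) (e,1) ∉ lS (n+1) ((laaksoPre (n+1)).s (e,1)) ∧
    lS (n+1) ((laaksoPre (n+1)).t (e,1)) = insert (lI (n+1) (e,1)) (lS (n+1) ((laaksoPre (n+1)).s (e,1))) := by
  simp only [sE1, tE1, lS_inr, lI_succ, gd1, shfe0, shfe1]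
  constructor
  · intro h
    rcases Finset.mem_union.1 h with h | h
    · exact hfresh ihm _ (by omega) (by omega) h
    · simp only [Finset.mem_insert, Finset.mem_singleton] at h; omega
  · ext x
    by_cases hb : x ∈ blow (lS n ((laaksoPre n).s e)) <;> simp [hb] <;> omega

private lemma es2 (ihm : lI n e ∉ lS n ((laaksoPre n).s e)) : lI (n+1) (e,2) ∉ lS (n+1) ((laaksoPre (n+1)).s (e,2)) ∧
    lS (n+1) ((laaksoPre (n+1)).t (e,2)) = insert (lI (n+1) (e,2)) (lS (n+1) ((laaksoPre (n+1)).s (e,2))) := by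
  simp only [sE2, tE2, lS_inr, lI_succ, gd2, shfe0, shfe2]
  constructor
  · intro h
    rcases Finset.mem_union.1 h with h | h
    · exact hfresh ihm _ (by omega) (by omega) h
    · simp only [Finset.mem_insert, Finset.mem_singleton] at h; omega
  · ext x
    by_cases hb : x ∈ blow (lS n ((laaksoPre n).s e)) <;> simp [hb] <;> omega

private lemma es3 (ihm : lI n e ∉ lS n ((laaksoPre n).s e)) : lI (n+1) (e,3) ∉ lS (n+1) ((laaksoPre (n+1)).s (e,3)) ∧
    lS (n+1) ((laaksoPre (n+1)).t (e,3)) = insert (lI (n+1) (e,3)) (lS (n+1) ((laaksoPre (n+1)).s (e,3))) := by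
  simp only [sE3, tE3, lS_inr, lI_succ, gd3, shfe1, shfe3]
  constructor
  · intro h
    rcases Finset.mem_union.1 h with h | h
    · exact hfresh ihm _ (by omega) (by omega) h
    · simp only [Finset.mem_insert, Finset.mem_singleton] at h; omega
  · ext x
    by_cases hb : x ∈ blow (lS n ((laaksoPre n).s e)) <;> simp [hb] <;> omega

private lemma es4 (ihm : lI n e ∉ lS n ((laaksoPre n).s e)) : lI (n+1) (e,4) ∉ lS (n+1) ((laaksoPre (n+1)).s (e,4)) ∧
    lS (n+1) ((laaksoPre (n+1)).t (e,4)) = insert (lI (n+1) (e,4)) (lS (n+1) ((laaksoPre (n+1)).s (e,4))) := by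
  simp only [sE4, tE4, lS_inr, lI_succ, gd4, shfe2, shfe3]
  constructor
  · intro h
    rcases Finset.mem_union.1 h with h | h
    · exact hfresh ihm _ (by omega) (by omega) h
    · simp only [Finset.mem_insert, Finset.mem_singleton] at h; omega
  · ext x
    by_cases hb : x ∈ blow (lS n ((laaksoPre n).s e)) <;> simp [hb] <;> omega

private lemma es5 (ihm : lI n e ∉ lS n ((laaksoPre n).s e)) (iht : lS n ((laaksoPre n).t e) = insert (lI n e) (lS n ((laaksoPre n).s e))) : lI (n+1) (e,5) ∉ lS (n+1) ((laaksoPre (n+1)).s (e,5)) ∧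
    lS (n+1) ((laaksoPre (n+1)).t (e,5)) = insert (lI (n+1) (e,5)) (lS (n+1) ((laaksoPre (n+1)).s (e,5))) := by
  simp only [sE5, tE5, lS_inl, lS_inr, lI_succ, gd5, shfe3, iht, blow_insert]
  constructor
  · intro h
    rcases Finset.mem_union.1 h with h | h
    · exact hfresh ihm _ (by omega) (by omega) h
    · simp only [Finset.mem_insert, Finset.mem_singleton] at h; omega
  · ext x
    by_cases hb : x ∈ blow (lS n ((laaksoPre n).s e)) <;>
      simp [hb, Finset.mem_Ico] <;> omega

end edgestep

lemma edgeProp : ∀ n (e : (laaksoPre n).E),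
    lI n e ∉ lS n ((laaksoPre n).s e) ∧
    lS n ((laaksoPre n).t e) = insert (lI n e) (lS n ((laaksoPre n).s e)) := by
  intro n
  induction n with
  | zero =>
    intro e
    constructor
    · simp [lS, laaksoPre]
    · simp only [lS, laaksoPre]
      norm_num
      rfl
  | succ n ih =>
    rintro ⟨e, k⟩
    obtain ⟨ihm, iht⟩ := ih e
    fin_cases k
    · exact es0 ihm
    · exact es1 ihm
    · exact es2 ihm
    · exact es3 ihm
    · exact es4 ihm
    · exact es5 ihm iht


-- shf algebra
lemma shf_union (off : ℕ) (s t : Finset ℕ) : shf off (s ∪ t) = shf off s ∪ shf off t :=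
  Finset.image_union _ _

lemma shf_shf (c d : ℕ) (s : Finset ℕ) : shf c (shf d s) = shf (c + d) s := by
  ext x; simp only [mem_shf]
  constructor
  · rintro ⟨h1, h2, h3⟩
    refine ⟨by omega, ?_⟩
    have h4 : x - (c + d) = x - c - d := by omega
    rw [h4]; exact h3
  · rintro ⟨h1, h2⟩
    refine ⟨by omega, by omega, ?_⟩
    have h4 : x - c - d = x - (c + d) := by omega
    rw [h4]; exact h2

@[simp] lemma shf_empty (off : ℕ) : shf off ∅ = ∅ := rfl

-- κ / Λ basic equations
@[simp] lemma Λ_succ (n : ℕ) (k : Fin 6) (e : (laaksoPre n).E) (j : Fin 6) :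
    Λ (n+1) k (e,j) = (Λ n k e, j) := rfl
@[simp] lemma κ_inl (n : ℕ) (k : Fin 6) (a : (laaksoPre n).V) :
    κ (n+1) k (Sum.inl a) = Sum.inl (κ n k a) := rfl
@[simp] lemma κ_inr (n : ℕ) (k : Fin 6) (e : (laaksoPre n).E) (j : Fin 4) :
    κ (n+1) k (Sum.inr (e,j)) = Sum.inr (Λ n k e, j) := rfl

lemma s_comm : ∀ n (k : Fin 6) (e : (laaksoPre n).E),
    (laaksoPre (n+1)).s (Λ n k e) = κ n k ((laaksoPre n).s e)
  | 0, k, e => rfl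
  | n+1, k, (f,j) => by
    fin_cases j
    · exact congrArg Sum.inl (s_comm n k f)
    all_goals rfl

lemma t_comm : ∀ n (k : Fin 6) (e : (laaksoPre n).E),
    (laaksoPre (n+1)).t (Λ n k e) = κ n k ((laaksoPre n).t e)
  | 0, k, e => rfl
  | n+1, k, (f,j) => by
    fin_cases j
    all_goals first
      | rfl
      | exact congrArg Sum.inl (t_comm n k f)

lemma lI_comm : ∀ n (k : Fin 6) (e : (laaksoPre n).E),
    lI (n+1) (Λ n k e) = gd k * 4^n + lI n e
  | 0, k, e => by
    show 4 * lI 0 e + gd k = gd k * 4^0 + lI 0 e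
    have h0 : lI 0 e = 0 := rfl
    rw [h0]; omega
  | n+1, k, (f,j) => by
    have := lI_comm n k f
    simp only [Λ_succ, lI_succ, this]
    have h5 : gd k * 4^(n+1) = 4 * (gd k * 4^n) := by ring
    omega

def Bse : Fin 6 → ℕ → Finset ℕ
  | k, 0 => lS 1 (κ 0 k (bot 0))
  | k, n+1 => blow (Bse k n)

lemma Scomp : ∀ n (k : Fin 6) (u : (laaksoPre n).V),
    lS (n+1) (κ n k u) = Bse k n ∪ shf (gd k * 4^n) (lS n u) := by
  intro n
  induction n with
  | zero =>
    intro k u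
    by_cases h : (show Fin 2 from u) = 0
    · have hu : u = bot 0 := h
      subst hu
      have : lS 0 (bot 0) = ∅ := rfl
      rw [this]
      simp [Bse]
    · have hu : u = topv 0 := by
        have : (show Fin 2 from u) = 1 := by omega
        exact this
      subst hu
      have h1 : κ 0 k (topv 0) = (laaksoPre 1).t ((0 : Fin 1), k) := rfl
      have h2 : κ 0 k (bot 0) = (laaksoPre 1).s ((0 : Fin 1), k) := rfl
      have h3 := (edgeProp 1 ((0 : Fin 1), k)).2
      have h4 : lS 0 (topv 0) = {0} := rfl
      have h5 : lI 1 ((0 : Fin 1), k) = gd k := by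
        have : lI 1 ((0 : Fin 1), k) = 4 * lI 0 (0 : Fin 1) + gd k := rfl
        have h0 : lI 0 (0 : Fin 1) = 0 := rfl
        omega
      rw [h1, h3, h4, h5]
      show insert (gd k) (Bse k 0) = Bse k 0 ∪ shf (gd k * 4 ^ 0) {0}
      have : shf (gd k * 4^0) {0} = {gd k} := by
        ext x; simp only [mem_shf]; simp; omega
      rw [this, Finset.union_comm, ← Finset.insert_eq]
  | succ n ih =>
    intro k u
    match u with
    | Sum.inl a =>
      rw [κ_inl, lS_inl, lS_inl, ih k a, blow_union, blow_shf]
      have : 4 * (gd k * 4^n) = gd k * 4^(n+1) := by ring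
      rw [this]
      rfl
    | Sum.inr (f,j) =>
      rw [κ_inr, lS_inr, lS_inr, s_comm, ih k, lI_comm, blow_union, blow_shf]
      have h1 : 4 * (gd k * 4^n) = gd k * 4^(n+1) := by ring
      have h2 : 4 * (gd k * 4^n + lI n f) = gd k * 4^(n+1) + 4 * lI n f := by ring
      rw [h1, h2, ← shf_shf (gd k * 4^(n+1)) (4 * lI n f) (eS j), shf_union]
      show (Bse k (n+1) ∪ _) ∪ _ = _
      rw [Finset.union_assoc]

def emb1 : ∀ n, (laaksoPre 1).V → (laaksoPre (n+1)).V
  | 0 => id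
  | n+1 => Sum.inl ∘ emb1 n

lemma κ_bot : ∀ n (k : Fin 6), κ n k (bot n) = emb1 n ((laaksoPre 1).s ((0:Fin 1), k))
  | 0, k => rfl
  | n+1, k => congrArg Sum.inl (κ_bot n k)

lemma κ_top : ∀ n (k : Fin 6), κ n k (topv n) = emb1 n ((laaksoPre 1).t ((0:Fin 1), k))
  | 0, k => rfl
  | n+1, k => congrArg Sum.inl (κ_top n k)

lemma st_ne (n : ℕ) (e : (laaksoPre n).E) : (laaksoPre n).s e ≠ (laaksoPre n).t e := by
  intro h
  obtain ⟨h1, h2⟩ := edgeProp n e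
  rw [← h] at h2
  have : lI n e ∈ lS n ((laaksoPre n).s e) := by
    rw [h2]; exact Finset.mem_insert_self _ _
  exact h1 this

lemma Λ_inj : ∀ n (k : Fin 6), Function.Injective (Λ n k)
  | 0, k => fun a b _ => by
    have : (show Fin 1 from a) = (show Fin 1 from b) := Subsingleton.elim _ _
    exact this
  | n+1, k => by
    intro a b h
    have h' : ((Λ n k a.1, a.2) : (laaksoPre (n+1)).E × Fin 6) = (Λ n k b.1, b.2) := h
    have h1 : Λ n k a.1 = Λ n k b.1 :=
      congrArg (Prod.fst : (laaksoPre (n+1)).E × Fin 6 → (laaksoPre (n+1)).E) h'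
    have h2 : a.2 = b.2 :=
      congrArg (Prod.snd : (laaksoPre (n+1)).E × Fin 6 → Fin 6) h' 
    have h3 : a.1 = b.1 := Λ_inj n k h1
    show a = b
    have ha : a = (a.1, a.2) := rfl
    have hb : b = (b.1, b.2) := rfl
    rw [ha, hb, h2, h3]

lemma κ_zero_eq (k : Fin 6) (v : (laaksoPre 0).V) :
    κ 0 k v = if (show Fin 2 from v) = 0 then (laaksoPre 1).s ((0:Fin 1), k)
      else (laaksoPre 1).t ((0:Fin 1), k) := rfl

lemma κ_inj : ∀ n (k : Fin 6), Function.Injective (κ n k)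
  | 0, k => by
    intro a b h
    by_cases ha : (show Fin 2 from a) = 0 <;> by_cases hb : (show Fin 2 from b) = 0
    · have : (show Fin 2 from a) = (show Fin 2 from b) := by rw [ha, hb]
      exact this
    · rw [κ_zero_eq, κ_zero_eq, if_pos ha, if_neg hb] at h
      exact absurd h (st_ne 1 _)
    · rw [κ_zero_eq, κ_zero_eq, if_neg ha, if_pos hb] at h
      exact absurd h.symm (st_ne 1 _)
    · have : (show Fin 2 from a) = (show Fin 2 from b) := by omega
      exact this
  | n+1, k => by
    intro a b h
    match a, b with
    | Sum.inl a, Sum.inl b =>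
      exact congrArg Sum.inl (κ_inj n k (Sum.inl_injective h))
    | Sum.inl a, Sum.inr (f,j) => exact absurd h (by simp [κ])
    | Sum.inr (f,j), Sum.inl b => exact absurd h (by simp [κ])
    | Sum.inr (e,i), Sum.inr (f,j) =>
      have h' := Sum.inr_injective h
      have h1 : Λ n k e = Λ n k f := congrArg Prod.fst h'
      have h2 : i = j := congrArg Prod.snd h'
      rw [Λ_inj n k h1, h2]

lemma Λ_surj : ∀ n (e : (laaksoPre (n+1)).E), ∃ k f, e = Λ n k f
  | 0, e => ⟨e.2, e.1, by
      show e = ((0 : Fin 1), e.2)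
      have h1 : e = (e.1, e.2) := rfl
      have h2 : e.1 = (0 : Fin 1) := Subsingleton.elim (α := Fin 1) _ _
      rw [h1, h2]; rfl⟩
  | n+1, e => by
    obtain ⟨k, g, hg⟩ := Λ_surj n e.1
    refine ⟨k, (g, e.2), ?_⟩
    show e = (Λ n k g, e.2)
    rw [← hg]
    rfl

lemma κ_surj : ∀ n (w : (laaksoPre (n+1)).V), ∃ k u, w = κ n k u
  | 0, w => by
    match w with
    | Sum.inl a =>
      by_cases h : (show Fin 2 from a) = 0
      · refine ⟨0, bot 0, ?_⟩
        have : a = bot 0 := h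
        rw [this]; rfl
      · refine ⟨5, topv 0, ?_⟩
        have : a = topv 0 := by
          have : (show Fin 2 from a) = 1 := by omega
          exact this
        rw [this]; rfl
    | Sum.inr (e, j) =>
      have he : e = (0 : Fin 1) := Subsingleton.elim (α := Fin 1) _ _
      rw [he]
      fin_cases j
      · refine ⟨0, topv 0, ?_⟩
        rw [κ_zero_eq, if_neg (by decide)]
        rfl
      · refine ⟨1, topv 0, ?_⟩
        rw [κ_zero_eq, if_neg (by decide)]
        rfl
      · refine ⟨2, topv 0, ?_⟩
        rw [κ_zero_eq, if_neg (by decide)]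
        rfl
      · refine ⟨3, topv 0, ?_⟩
        rw [κ_zero_eq, if_neg (by decide)]
        rfl
  | n+1, w => by
    match w with
    | Sum.inl a =>
      obtain ⟨k, u, hu⟩ := κ_surj n a
      exact ⟨k, Sum.inl u, by rw [hu]; rfl⟩
    | Sum.inr (e, j) =>
      obtain ⟨k, f, hf⟩ := Λ_surj n e
      exact ⟨k, Sum.inr (f, j), by rw [hf]; rfl⟩


open SimpleGraph

lemma adj_iff {n : ℕ} {u v : (laaksoPre n).V} : (laaksoGraph n).Adj u v ↔ u ≠ v ∧
    ((∃ e, (laaksoPre n).s e = u ∧ (laaksoPre n).t e = v) ∨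
     (∃ e, (laaksoPre n).s e = v ∧ (laaksoPre n).t e = u)) :=
  SimpleGraph.fromRel_adj _ u v

lemma adj_st (n : ℕ) (e : (laaksoPre n).E) :
    (laaksoGraph n).Adj ((laaksoPre n).s e) ((laaksoPre n).t e) :=
  adj_iff.2 ⟨st_ne n e, Or.inl ⟨e, rfl, rfl⟩⟩

-- the 4-step path replacing an edge, one level up
def path4 (n : ℕ) (e : (laaksoPre n).E) :
    (laaksoGraph (n+1)).Walk (Sum.inl ((laaksoPre n).s e)) (Sum.inl ((laaksoPre n).t e)) :=
  .cons (adj_st (n+1) (e,0)) (.cons (adj_st (n+1) (e,1))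
    (.cons (adj_st (n+1) (e,3)) (.cons (adj_st (n+1) (e,5)) .nil)))

@[simp] lemma path4_length (n : ℕ) (e : (laaksoPre n).E) : (path4 n e).length = 4 := rfl

lemma blowWalk {n : ℕ} : ∀ {u v : (laaksoPre n).V} (w : (laaksoGraph n).Walk u v),
    ∃ w' : (laaksoGraph (n+1)).Walk (Sum.inl u) (Sum.inl v), w'.length = 4 * w.length := by
  intro u v w
  induction w with
  | nil => exact ⟨.nil, rfl⟩
  | @cons u x v h p ih =>
    obtain ⟨w', hw'⟩ := ih
    obtain ⟨hne, he⟩ := adj_iff.1 h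
    rcases he with ⟨e, hs, ht⟩ | ⟨e, hs, ht⟩
    · refine ⟨((path4 n e).copy (by rw [hs]) (by rw [ht])).append w', ?_⟩
      erw [Walk.length_append, Walk.length_copy, path4_length, hw', Walk.length_cons]
      ring
    · refine ⟨((path4 n e).reverse.copy (by rw [ht]) (by rw [hs])).append w', ?_⟩
      erw [Walk.length_append, Walk.length_copy, Walk.length_reverse, path4_length, hw',
        Walk.length_cons]
      ring

-- walks inside a gadget, from internal vertices down to the source
def downIn (n : ℕ) (e : (laaksoPre n).E) : ∀ k : Fin 4,
    (laaksoGraph (n+1)).Walk (Sum.inr (e,k)) (Sum.inl ((laaksoPre n).s e))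
  | 0 => (adj_st (n+1) (e,0)).symm.toWalk
  | 1 => .cons (adj_st (n+1) (e,1)).symm (downIn n e 0)
  | 2 => .cons (adj_st (n+1) (e,2)).symm (downIn n e 0)
  | 3 => .cons (adj_st (n+1) (e,3)).symm (downIn n e 1)

lemma downIn_length (n : ℕ) (e : (laaksoPre n).E) :
    ∀ k : Fin 4, (downIn n e k).length = (eS k).card := by
  intro k
  fin_cases k <;> simp [downIn, eS] <;> rfl

-- walks inside a gadget, from internal vertices up to the target
def upIn (n : ℕ) (e : (laaksoPre n).E) : ∀ k : Fin 4,
    (laaksoGraph (n+1)).Walk (Sum.inr (e,k)) (Sum.inl ((laaksoPre n).t e))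
  | 0 => .cons (adj_st (n+1) (e,1)) (.cons (adj_st (n+1) (e,3)) ((adj_st (n+1) (e,5)).toWalk))
  | 1 => .cons (adj_st (n+1) (e,3)) ((adj_st (n+1) (e,5)).toWalk)
  | 2 => .cons (adj_st (n+1) (e,4)) ((adj_st (n+1) (e,5)).toWalk)
  | 3 => (adj_st (n+1) (e,5)).toWalk

lemma upIn_length (n : ℕ) (e : (laaksoPre n).E) :
    ∀ k : Fin 4, (upIn n e k).length + (eS k).card = 4 := by
  intro k
  fin_cases k <;> simp [upIn, eS] <;> rfl

lemma blow_shf_disj (n : ℕ) (e : (laaksoPre n).E) (k : Fin 4) :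
    Disjoint (blow (lS n ((laaksoPre n).s e))) (shf (4 * lI n e) (eS k)) := by
  rw [Finset.disjoint_left]
  intro x hx hx'
  rw [mem_blow] at hx
  rw [mem_shf] at hx'
  have hk : eS k ⊆ Finset.range 4 := by fin_cases k <;> decide
  have := hk hx'.2
  simp only [Finset.mem_range] at this
  have : x / 4 = lI n e := by omega
  rw [this] at hx
  exact (edgeProp n e).1 hx

lemma card_lS_inr (n : ℕ) (e : (laaksoPre n).E) (k : Fin 4) :
    (lS (n+1) (Sum.inr (e,k))).card = 4 * (lS n ((laaksoPre n).s e)).card + (eS k).card := by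
  rw [lS_inr, Finset.card_union_of_disjoint (blow_shf_disj n e k), card_blow, card_shf]

lemma card_lS_t (n : ℕ) (e : (laaksoPre n).E) :
    (lS n ((laaksoPre n).t e)).card = (lS n ((laaksoPre n).s e)).card + 1 := by
  obtain ⟨h1, h2⟩ := edgeProp n e
  rw [h2, Finset.card_insert_of_notMem h1]

lemma exists_walk_bot : ∀ n (u : (laaksoPre n).V),
    ∃ w : (laaksoGraph n).Walk u (bot n), w.length = (lS n u).card := by
  intro n
  induction n with
  | zero =>
    intro u
    by_cases h : (show Fin 2 from u) = 0
    · have : u = bot 0 := h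
      subst this
      exact ⟨.nil, rfl⟩
    · have hu : u = topv 0 := by
        have : (show Fin 2 from u) = 1 := by omega
        exact this
      subst hu
      refine ⟨(adj_st 0 (0 : Fin 1)).symm.toWalk, rfl⟩
  | succ n ih =>
    intro u
    match u with
    | Sum.inl a =>
      obtain ⟨w, hw⟩ := ih a
      obtain ⟨w', hw'⟩ := blowWalk w
      refine ⟨w', ?_⟩
      erw [hw', hw, lS_inl, card_blow]
    | Sum.inr (e,k) =>
      obtain ⟨w, hw⟩ := ih ((laaksoPre n).s e)
      obtain ⟨w', hw'⟩ := blowWalk w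
      refine ⟨(downIn n e k).append w', ?_⟩
      erw [Walk.length_append, downIn_length, hw', hw, card_lS_inr]
      omega

lemma exists_walk_top : ∀ n (u : (laaksoPre n).V),
    ∃ w : (laaksoGraph n).Walk u (topv n), w.length + (lS n u).card = 4^n := by
  intro n
  induction n with
  | zero =>
    intro u
    by_cases h : (show Fin 2 from u) = 0
    · have : u = bot 0 := h
      subst this
      exact ⟨(adj_st 0 (0 : Fin 1)).toWalk, rfl⟩
    · have hu : u = topv 0 := by
        have : (show Fin 2 from u) = 1 := by omega
        exact this
      subst hu
      exact ⟨.nil, rfl⟩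
  | succ n ih =>
    intro u
    match u with
    | Sum.inl a =>
      obtain ⟨w, hw⟩ := ih a
      obtain ⟨w', hw'⟩ := blowWalk w
      refine ⟨w', ?_⟩
      erw [hw', lS_inl, card_blow]
      have : 4^(n+1) = 4 * 4^n := by ring
      omega
    | Sum.inr (e,k) =>
      obtain ⟨w, hw⟩ := ih ((laaksoPre n).t e)
      obtain ⟨w', hw'⟩ := blowWalk w
      refine ⟨(upIn n e k).append w', ?_⟩
      erw [Walk.length_append, hw']
      have h1 := upIn_length n e k
      have h2 := card_lS_inr n e k
      have h3 := card_lS_t n e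
      have h4 : 4^(n+1) = 4 * 4^n := by ring
      omega

lemma laakso_reachable (n : ℕ) (u v : (laaksoPre n).V) : (laaksoGraph n).Reachable u v := by
  obtain ⟨w1, _⟩ := exists_walk_bot n u
  obtain ⟨w2, _⟩ := exists_walk_bot n v
  exact ⟨w1.append w2.reverse⟩

lemma κAdj {n : ℕ} (k : Fin 6) {u v : (laaksoPre n).V} (h : (laaksoGraph n).Adj u v) :
    (laaksoGraph (n+1)).Adj (κ n k u) (κ n k v) := by
  obtain ⟨hne, he⟩ := adj_iff.1 h
  refine adj_iff.2 ⟨fun hh => hne (κ_inj n k hh), ?_⟩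
  rcases he with ⟨e, hs, ht⟩ | ⟨e, hs, ht⟩
  · exact Or.inl ⟨Λ n k e, by rw [s_comm, hs], by rw [t_comm, ht]⟩
  · exact Or.inr ⟨Λ n k e, by rw [s_comm, hs], by rw [t_comm, ht]⟩

lemma κWalk {n : ℕ} (k : Fin 6) : ∀ {u v : (laaksoPre n).V} (w : (laaksoGraph n).Walk u v),
    ∃ w' : (laaksoGraph (n+1)).Walk (κ n k u) (κ n k v), w'.length = w.length := by
  intro u v w
  induction w with
  | nil => exact ⟨.nil, rfl⟩
  | cons h p ih =>
    obtain ⟨w', hw'⟩ := ih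
    exact ⟨.cons (κAdj k h) w', by simp [hw']⟩


-- gg / Φ lemmas
lemma gg_union {A B : Finset ℕ} (h : Disjoint A B) (J : ℕ) :
    gg J (A ∪ B) = gg J A + gg J B := by
  unfold gg
  rw [Finset.filter_union,
    Finset.card_union_of_disjoint (Finset.disjoint_filter_filter h),
    Finset.card_union_of_disjoint h]
  push_cast; ring

lemma gg_high {J : ℕ} {S : Finset ℕ} (h : ∀ x ∈ S, x < J) : gg J S = S.card := by
  unfold gg
  rw [Finset.filter_true_of_mem h]
  ring

lemma gg_low {J : ℕ} {S : Finset ℕ} (h : ∀ x ∈ S, J ≤ x) : gg J S = -(S.card : ℤ) := by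
  unfold gg
  rw [Finset.filter_false_of_mem (fun x hx => by have := h x hx; omega)]
  simp

lemma gg_shift (off J : ℕ) (s : Finset ℕ) : gg (off + J) (shf off s) = gg J s := by
  unfold gg
  rw [card_shf]
  congr 2
  have : (shf off s).filter (· < off + J) = shf off (s.filter (· < J)) := by
    ext x
    simp only [Finset.mem_filter, mem_shf]
    constructor
    · rintro ⟨⟨h1, h2⟩, h3⟩
      exact ⟨h1, h2, by omega⟩
    · rintro ⟨h1, h2, h3⟩
      exact ⟨⟨h1, h2⟩, by omega⟩
  rw [this, card_shf]

lemma gg_Ico_high {J a b : ℕ} (h : b ≤ J) (hab : a ≤ b) :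
    gg J (Finset.Ico a b) = (b : ℤ) - a := by
  rw [gg_high (fun x hx => by simp only [Finset.mem_Ico] at hx; omega), Nat.card_Ico]
  omega

lemma gg_Ico_low {J a b : ℕ} (h : J ≤ a) (hab : a ≤ b) :
    gg J (Finset.Ico a b) = (a : ℤ) - b := by
  rw [gg_low (fun x hx => by simp only [Finset.mem_Ico] at hx; omega), Nat.card_Ico]
  omega

lemma shf_mem_range {off H x : ℕ} {s : Finset ℕ} (hs : s ⊆ Finset.range H)
    (hx : x ∈ shf off s) : off ≤ x ∧ x < off + H := by
  rw [mem_shf] at hx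
  have := hs hx.2
  simp only [Finset.mem_range] at this
  omega

lemma gg_shf_high {J off H : ℕ} {s : Finset ℕ} (hs : s ⊆ Finset.range H)
    (h : off + H ≤ J) : gg J (shf off s) = s.card := by
  rw [gg_high (fun x hx => by have := shf_mem_range hs hx; omega), card_shf]

lemma gg_shf_low {J off H : ℕ} {s : Finset ℕ} (hs : s ⊆ Finset.range H)
    (h : J ≤ off) : gg J (shf off s) = -(s.card : ℤ) := by
  rw [gg_low (fun x hx => by have := shf_mem_range hs hx; omega), card_shf]

lemma gg_range_top {J : ℕ} {S : Finset ℕ} (hs : S ⊆ Finset.range J) : gg J S = S.card :=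
  gg_high (fun x hx => by have := hs hx; simpa using this)

-- explicit forms of the base sets
lemma Bse_zero_eq (k : Fin 6) : Bse k 0 = lS 1 (κ 0 k (bot 0)) := rfl

lemma Bse0_eq : ∀ n, Bse 0 n = ∅
  | 0 => rfl
  | n+1 => by rw [Bse, Bse0_eq n]; rfl

lemma Bse1_eq : ∀ n, Bse 1 n = Finset.Ico 0 (4^n)
  | 0 => rfl
  | n+1 => by
    rw [Bse, Bse1_eq n, blow_Ico]
    ext x
    simp only [Finset.mem_Ico]
    have : (4:ℕ)^(n+1) = 4 * 4^n := by ring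
    omega

lemma Bse2_eq : ∀ n, Bse 2 n = Finset.Ico 0 (4^n)
  | 0 => rfl
  | n+1 => by
    rw [Bse, Bse2_eq n, blow_Ico]
    ext x
    simp only [Finset.mem_Ico]
    have : (4:ℕ)^(n+1) = 4 * 4^n := by ring
    omega

lemma Bse3_eq : ∀ n, Bse 3 n = Finset.Ico 0 (2 * 4^n)
  | 0 => rfl
  | n+1 => by
    rw [Bse, Bse3_eq n, blow_Ico]
    ext x
    simp only [Finset.mem_Ico]
    have : (4:ℕ)^(n+1) = 4 * 4^n := by ring
    omega

lemma Bse4_eq : ∀ n, Bse 4 n = Finset.Ico 0 (4^n) ∪ Finset.Ico (2 * 4^n) (3 * 4^n)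
  | 0 => rfl
  | n+1 => by
    rw [Bse, Bse4_eq n, blow_union, blow_Ico, blow_Ico]
    ext x
    simp only [Finset.mem_union, Finset.mem_Ico]
    have : (4:ℕ)^(n+1) = 4 * 4^n := by ring
    omega

lemma Bse5_eq : ∀ n, Bse 5 n = Finset.Ico 0 (3 * 4^n)
  | 0 => rfl
  | n+1 => by
    rw [Bse, Bse5_eq n, blow_Ico]
    ext x
    simp only [Finset.mem_Ico]
    have : (4:ℕ)^(n+1) = 4 * 4^n := by ring
    omega


-- bound on elements of the base set relative to its own quarter
lemma lS_bot : ∀ n, lS n (bot n) = ∅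
  | 0 => rfl
  | n+1 => by
    show blow (lS n (bot n)) = ∅
    rw [lS_bot n]
    rfl

lemma Bse_bound : ∀ n (k : Fin 6) x, x ∈ Bse k n → x < gd k * 4^n ∨ gd k * 4^n + 4^n ≤ x
  | 0, k, x => by
    intro hx
    have hsub := lS_subset 1 (κ 0 k (bot 0)) hx
    simp only [Finset.mem_range] at hsub
    have hne : (gd k : ℕ) ∉ Bse k 0 := by fin_cases k <;> decide
    have hxg : x ≠ gd k := fun h => hne (h ▸ hx)
    have : (4:ℕ)^0 = 1 := rfl
    omega
  | n+1, k, x => by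
    intro hx
    rw [Bse, mem_blow] at hx
    have := Bse_bound n k (x/4) hx
    have e1 : gd k * 4^(n+1) = 4*(gd k * 4^n) := by ring
    have e2 : (4:ℕ)^(n+1) = 4*4^n := by ring
    omega

lemma Bse_shf_disj (n : ℕ) (k : Fin 6) {s : Finset ℕ} (hs : s ⊆ Finset.range (4^n)) :
    Disjoint (Bse k n) (shf (gd k * 4^n) s) := by
  rw [Finset.disjoint_right]
  intro x hx hxB
  have h1 := shf_mem_range hs hx
  have h2 := Bse_bound n k x hxB
  omega

lemma Scomp_card (n : ℕ) (k : Fin 6) (u : (laaksoPre n).V) :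
    (lS (n+1) (κ n k u)).card = (Bse k n).card + (lS n u).card := by
  rw [Scomp, Finset.card_union_of_disjoint (Bse_shf_disj n k (lS_subset n u)), card_shf]

-- the main combinatorial statement
def MainS (n : ℕ) (u v : (laaksoPre n).V) : Prop := ∃ J : ℕ,
  ((laaksoGraph n).dist u v : ℤ) ≤ 2 * Φ J (lS n u) (lS n v) ∨
  ((laaksoGraph n).dist u v : ℤ) ≤ 2 * Φ J (lS n v) (lS n u)

lemma mainSymm {n : ℕ} {u v : (laaksoPre n).V} (h : MainS n u v) : MainS n v u := by
  obtain ⟨J, h⟩ := h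
  exact ⟨J, by rw [SimpleGraph.dist_comm]; tauto⟩

lemma mainRefl {n : ℕ} (u : (laaksoPre n).V) : MainS n u u :=
  ⟨0, Or.inl (by simp [Φ, SimpleGraph.dist_self])⟩

lemma Φcopy (n : ℕ) (k : Fin 6) (J : ℕ) (u v : (laaksoPre n).V) :
    Φ (gd k * 4^n + J) (lS (n+1) (κ n k u)) (lS (n+1) (κ n k v)) = Φ J (lS n u) (lS n v) := by
  rw [Φ, Scomp, Scomp,
    gg_union (Bse_shf_disj n k (lS_subset n u)),
    gg_union (Bse_shf_disj n k (lS_subset n v)),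
    gg_shift, gg_shift, Φ]
  ring

lemma sameCopy (n : ℕ) (k : Fin 6) (u v : (laaksoPre n).V) (IH : MainS n u v) :
    MainS (n+1) (κ n k u) (κ n k v) := by
  obtain ⟨J, hJ⟩ := IH
  have hd : ((laaksoGraph (n+1)).dist (κ n k u) (κ n k v) : ℤ) ≤
      ((laaksoGraph n).dist u v : ℤ) := by
    obtain ⟨w, hw⟩ := (laakso_reachable n u v).exists_walk_length_eq_dist
    obtain ⟨w', hw'⟩ := κWalk k w
    have h := SimpleGraph.dist_le w'
    rw [hw', hw] at h
    exact_mod_cast h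
  refine ⟨gd k * 4^n + J, ?_⟩
  rw [Φcopy, Φcopy]
  rcases hJ with h | h
  · exact Or.inl (by omega)
  · exact Or.inr (by omega)

-- walk pieces
lemma wUpC (n : ℕ) (k : Fin 6) (u : (laaksoPre n).V) :
    ∃ w : (laaksoGraph (n+1)).Walk (κ n k u) (emb1 n ((laaksoPre 1).t ((0:Fin 1),k))),
      w.length + (lS n u).card = 4^n := by
  obtain ⟨w, hw⟩ := exists_walk_top n u
  obtain ⟨w', hw'⟩ := κWalk k w
  exact ⟨w'.copy rfl (κ_top n k), by rw [Walk.length_copy, hw']; exact hw⟩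

lemma wDownC (n : ℕ) (k : Fin 6) (u : (laaksoPre n).V) :
    ∃ w : (laaksoGraph (n+1)).Walk (κ n k u) (emb1 n ((laaksoPre 1).s ((0:Fin 1),k))),
      w.length = (lS n u).card := by
  obtain ⟨w, hw⟩ := exists_walk_bot n u
  obtain ⟨w', hw'⟩ := κWalk k w
  exact ⟨w'.copy rfl (κ_bot n k), by rw [Walk.length_copy, hw']; exact hw⟩

lemma wCopy (n : ℕ) (k : Fin 6) :
    ∃ w : (laaksoGraph (n+1)).Walk (emb1 n ((laaksoPre 1).s ((0:Fin 1),k)))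
      (emb1 n ((laaksoPre 1).t ((0:Fin 1),k))), w.length = 4^n := by
  obtain ⟨w, hw⟩ := wUpC n k (bot n)
  rw [lS_bot] at hw
  refine ⟨w.copy (κ_bot n k) rfl, ?_⟩
  rw [Walk.length_copy]
  simpa using hw

lemma vertCase {n : ℕ} {u v : (laaksoPre n).V} (w : (laaksoGraph n).Walk u v)
    (hw : (w.length : ℤ) ≤ 2 * (((lS n v).card : ℤ) - (lS n u).card)) : MainS n u v := by
  refine ⟨4^n, Or.inr ?_⟩
  have h1 : Φ (4^n) (lS n v) (lS n u) = ((lS n v).card : ℤ) - (lS n u).card := by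
    rw [Φ, gg_range_top (lS_subset n v), gg_range_top (lS_subset n u)]
  have h2 : ((laaksoGraph n).dist u v : ℤ) ≤ w.length := by
    exact_mod_cast SimpleGraph.dist_le w
  rw [h1]
  omega

-- cardinalities of base sets
lemma card_Bse0 (n : ℕ) : (Bse 0 n).card = 0 := by rw [Bse0_eq]; rfl
lemma card_Bse1 (n : ℕ) : (Bse 1 n).card = 4^n := by rw [Bse1_eq, Nat.card_Ico]; exact Nat.sub_zero _
lemma card_Bse2 (n : ℕ) : (Bse 2 n).card = 4^n := by rw [Bse2_eq, Nat.card_Ico]; exact Nat.sub_zero _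
lemma card_Bse3 (n : ℕ) : (Bse 3 n).card = 2 * 4^n := by rw [Bse3_eq, Nat.card_Ico]; exact Nat.sub_zero _
lemma card_Bse4 (n : ℕ) : (Bse 4 n).card = 2 * 4^n := by
  rw [Bse4_eq, Finset.card_union_of_disjoint, Nat.card_Ico, Nat.card_Ico]
  · omega
  · rw [Finset.disjoint_left]
    intro x hx hx'
    simp only [Finset.mem_Ico] at hx hx'
    omega
lemma card_Bse5 (n : ℕ) : (Bse 5 n).card = 3 * 4^n := by rw [Bse5_eq, Nat.card_Ico]; exact Nat.sub_zero _


lemma cross01 (n : ℕ) (u v : (laaksoPre n).V) : MainS (n+1) (κ n 0 u) (κ n 1 v) := by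
  obtain ⟨w1, hw1⟩ := wUpC n 0 u
  obtain ⟨w2, hw2⟩ := wDownC n 1 v
  refine vertCase (w1.append w2.reverse) ?_
  have hcu : (lS n u).card ≤ 4^n := by
    simpa using Finset.card_le_card (lS_subset n u)
  simp only [Walk.length_append, Walk.length_reverse]
  erw [Scomp_card, Scomp_card, card_Bse0, card_Bse1]
  have hl : (w1.append w2.reverse).length = w1.length + w2.length := (Walk.length_append w1 w2.reverse).trans (congrArg (w1.length + ·) (Walk.length_reverse w2))
  omega

lemma cross02 (n : ℕ) (u v : (laaksoPre n).V) : MainS (n+1) (κ n 0 u) (κ n 2 v) := by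
  obtain ⟨w1, hw1⟩ := wUpC n 0 u
  obtain ⟨w2, hw2⟩ := wDownC n 2 v
  refine vertCase (w1.append w2.reverse) ?_
  have hcu : (lS n u).card ≤ 4^n := by
    simpa using Finset.card_le_card (lS_subset n u)
  simp only [Walk.length_append, Walk.length_reverse]
  erw [Scomp_card, Scomp_card, card_Bse0, card_Bse2]
  have hl : (w1.append w2.reverse).length = w1.length + w2.length := (Walk.length_append w1 w2.reverse).trans (congrArg (w1.length + ·) (Walk.length_reverse w2))
  omega

lemma cross03 (n : ℕ) (u v : (laaksoPre n).V) : MainS (n+1) (κ n 0 u) (κ n 3 v) := by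
  obtain ⟨w1, hw1⟩ := wUpC n 0 u
  obtain ⟨c0, hc0⟩ := wCopy n 1
  obtain ⟨w2, hw2⟩ := wDownC n 3 v
  refine vertCase ((w1.append c0).append w2.reverse) ?_
  have hcu : (lS n u).card ≤ 4^n := by
    simpa using Finset.card_le_card (lS_subset n u)
  simp only [Walk.length_append, Walk.length_reverse]
  erw [Scomp_card, Scomp_card, card_Bse0, card_Bse3]
  have hl : ((w1.append c0).append w2.reverse).length = w1.length + c0.length + w2.length := (Walk.length_append (w1.append c0) w2.reverse).trans (congrArg₂ (· + ·) (Walk.length_append w1 c0) (Walk.length_reverse w2))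
  omega

lemma cross04 (n : ℕ) (u v : (laaksoPre n).V) : MainS (n+1) (κ n 0 u) (κ n 4 v) := by
  obtain ⟨w1, hw1⟩ := wUpC n 0 u
  obtain ⟨c0, hc0⟩ := wCopy n 2
  obtain ⟨w2, hw2⟩ := wDownC n 4 v
  refine vertCase ((w1.append c0).append w2.reverse) ?_
  have hcu : (lS n u).card ≤ 4^n := by
    simpa using Finset.card_le_card (lS_subset n u)
  simp only [Walk.length_append, Walk.length_reverse]
  erw [Scomp_card, Scomp_card, card_Bse0, card_Bse4]
  have hl : ((w1.append c0).append w2.reverse).length = w1.length + c0.length + w2.length := (Walk.length_append (w1.append c0) w2.reverse).trans (congrArg₂ (· + ·) (Walk.length_append w1 c0) (Walk.length_reverse w2))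
  omega

lemma cross05 (n : ℕ) (u v : (laaksoPre n).V) : MainS (n+1) (κ n 0 u) (κ n 5 v) := by
  obtain ⟨w1, hw1⟩ := wUpC n 0 u
  obtain ⟨c0, hc0⟩ := wCopy n 1
  obtain ⟨c1, hc1⟩ := wCopy n 3
  obtain ⟨w2, hw2⟩ := wDownC n 5 v
  refine vertCase (((w1.append c0).append c1).append w2.reverse) ?_
  have hcu : (lS n u).card ≤ 4^n := by
    simpa using Finset.card_le_card (lS_subset n u)
  simp only [Walk.length_append, Walk.length_reverse]
  erw [Scomp_card, Scomp_card, card_Bse0, card_Bse5]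
  have hl : (((w1.append c0).append c1).append w2.reverse).length = w1.length + c0.length + c1.length + w2.length := (Walk.length_append ((w1.append c0).append c1) w2.reverse).trans (congrArg₂ (· + ·) ((Walk.length_append (w1.append c0) c1).trans (congrArg (· + c1.length) (Walk.length_append w1 c0))) (Walk.length_reverse w2))
  omega

lemma cross13 (n : ℕ) (u v : (laaksoPre n).V) : MainS (n+1) (κ n 1 u) (κ n 3 v) := by
  obtain ⟨w1, hw1⟩ := wUpC n 1 u
  obtain ⟨w2, hw2⟩ := wDownC n 3 v
  refine vertCase (w1.append w2.reverse) ?_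
  have hcu : (lS n u).card ≤ 4^n := by
    simpa using Finset.card_le_card (lS_subset n u)
  simp only [Walk.length_append, Walk.length_reverse]
  erw [Scomp_card, Scomp_card, card_Bse1, card_Bse3]
  have hl : (w1.append w2.reverse).length = w1.length + w2.length := (Walk.length_append w1 w2.reverse).trans (congrArg (w1.length + ·) (Walk.length_reverse w2))
  omega

lemma cross15 (n : ℕ) (u v : (laaksoPre n).V) : MainS (n+1) (κ n 1 u) (κ n 5 v) := by
  obtain ⟨w1, hw1⟩ := wUpC n 1 u
  obtain ⟨c0, hc0⟩ := wCopy n 3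
  obtain ⟨w2, hw2⟩ := wDownC n 5 v
  refine vertCase ((w1.append c0).append w2.reverse) ?_
  have hcu : (lS n u).card ≤ 4^n := by
    simpa using Finset.card_le_card (lS_subset n u)
  simp only [Walk.length_append, Walk.length_reverse]
  erw [Scomp_card, Scomp_card, card_Bse1, card_Bse5]
  have hl : ((w1.append c0).append w2.reverse).length = w1.length + c0.length + w2.length := (Walk.length_append (w1.append c0) w2.reverse).trans (congrArg₂ (· + ·) (Walk.length_append w1 c0) (Walk.length_reverse w2))
  omega

lemma cross24 (n : ℕ) (u v : (laaksoPre n).V) : MainS (n+1) (κ n 2 u) (κ n 4 v) := by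
  obtain ⟨w1, hw1⟩ := wUpC n 2 u
  obtain ⟨w2, hw2⟩ := wDownC n 4 v
  refine vertCase (w1.append w2.reverse) ?_
  have hcu : (lS n u).card ≤ 4^n := by
    simpa using Finset.card_le_card (lS_subset n u)
  simp only [Walk.length_append, Walk.length_reverse]
  erw [Scomp_card, Scomp_card, card_Bse2, card_Bse4]
  have hl : (w1.append w2.reverse).length = w1.length + w2.length := (Walk.length_append w1 w2.reverse).trans (congrArg (w1.length + ·) (Walk.length_reverse w2))
  omega

lemma cross25 (n : ℕ) (u v : (laaksoPre n).V) : MainS (n+1) (κ n 2 u) (κ n 5 v) := by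
  obtain ⟨w1, hw1⟩ := wUpC n 2 u
  obtain ⟨c0, hc0⟩ := wCopy n 4
  obtain ⟨w2, hw2⟩ := wDownC n 5 v
  refine vertCase ((w1.append c0).append w2.reverse) ?_
  have hcu : (lS n u).card ≤ 4^n := by
    simpa using Finset.card_le_card (lS_subset n u)
  simp only [Walk.length_append, Walk.length_reverse]
  erw [Scomp_card, Scomp_card, card_Bse2, card_Bse5]
  have hl : ((w1.append c0).append w2.reverse).length = w1.length + c0.length + w2.length := (Walk.length_append (w1.append c0) w2.reverse).trans (congrArg₂ (· + ·) (Walk.length_append w1 c0) (Walk.length_reverse w2))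
  omega

lemma cross35 (n : ℕ) (u v : (laaksoPre n).V) : MainS (n+1) (κ n 3 u) (κ n 5 v) := by
  obtain ⟨w1, hw1⟩ := wUpC n 3 u
  obtain ⟨w2, hw2⟩ := wDownC n 5 v
  refine vertCase (w1.append w2.reverse) ?_
  have hcu : (lS n u).card ≤ 4^n := by
    simpa using Finset.card_le_card (lS_subset n u)
  simp only [Walk.length_append, Walk.length_reverse]
  erw [Scomp_card, Scomp_card, card_Bse3, card_Bse5]
  have hl : (w1.append w2.reverse).length = w1.length + w2.length := (Walk.length_append w1 w2.reverse).trans (congrArg (w1.length + ·) (Walk.length_reverse w2))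
  omega

lemma cross45 (n : ℕ) (u v : (laaksoPre n).V) : MainS (n+1) (κ n 4 u) (κ n 5 v) := by
  obtain ⟨w1, hw1⟩ := wUpC n 4 u
  obtain ⟨w2, hw2⟩ := wDownC n 5 v
  refine vertCase (w1.append w2.reverse) ?_
  have hcu : (lS n u).card ≤ 4^n := by
    simpa using Finset.card_le_card (lS_subset n u)
  simp only [Walk.length_append, Walk.length_reverse]
  erw [Scomp_card, Scomp_card, card_Bse4, card_Bse5]
  have hl : (w1.append w2.reverse).length = w1.length + w2.length := (Walk.length_append w1 w2.reverse).trans (congrArg (w1.length + ·) (Walk.length_reverse w2))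
  omega


lemma cross12 (n : ℕ) (u v : (laaksoPre n).V) : MainS (n+1) (κ n 1 u) (κ n 2 v) := by
  obtain ⟨w1, hw1⟩ := wDownC n 1 u
  obtain ⟨w2, hw2⟩ := wDownC n 2 v
  have hp : 0 < 4^n := by positivity
  have hsu := lS_subset n u
  have hsv := lS_subset n v
  refine ⟨2 * 4^n, Or.inl ?_⟩
  have hΦ : Φ (2 * 4^n) (lS (n+1) (κ n 1 u)) (lS (n+1) (κ n 2 v)) =
      ((lS n u).card : ℤ) + (lS n v).card := by
    rw [Φ, Scomp, Scomp, gg_union (Bse_shf_disj n 1 hsu), gg_union (Bse_shf_disj n 2 hsv),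
      Bse1_eq, Bse2_eq]
    simp only [gd1, gd2, one_mul]
    have g1 : gg (2 * 4^n) (Finset.Ico 0 (4^n)) = ((4^n : ℕ) : ℤ) - (0:ℕ) :=
      gg_Ico_high (by omega) (by omega)
    have g2 : gg (2 * 4^n) (shf (4^n) (lS n u)) = ((lS n u).card : ℤ) :=
      gg_shf_high hsu (by omega)
    have g3 : gg (2 * 4^n) (shf (2 * 4^n) (lS n v)) = -((lS n v).card : ℤ) :=
      gg_shf_low hsv (by omega)
    rw [g1, g2, g3]
    push_cast
    ring
  rw [hΦ]
  have hd : ((laaksoGraph (n+1)).dist (κ n 1 u) (κ n 2 v) : ℤ) ≤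
      ((lS n u).card : ℤ) + (lS n v).card := by
    have h := SimpleGraph.dist_le (w1.append w2.reverse)
    replace h : (laaksoGraph (n+1)).dist (κ n 1 u) (κ n 2 v) ≤ (lS n u).card + (lS n v).card := by have hl : (w1.append w2.reverse).length = w1.length + w2.length := (Walk.length_append w1 w2.reverse).trans (congrArg (w1.length + ·) (Walk.length_reverse w2)); omega
    exact_mod_cast h
  omega

lemma cross34 (n : ℕ) (u v : (laaksoPre n).V) : MainS (n+1) (κ n 3 u) (κ n 4 v) := by
  obtain ⟨w1, hw1⟩ := wUpC n 3 u
  obtain ⟨w2, hw2⟩ := wUpC n 4 v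
  have hp : 0 < 4^n := by positivity
  have hsu := lS_subset n u
  have hsv := lS_subset n v
  refine ⟨2 * 4^n, Or.inl ?_⟩
  have hΦ : Φ (2 * 4^n) (lS (n+1) (κ n 3 u)) (lS (n+1) (κ n 4 v)) =
      2 * (4:ℤ)^n - (lS n u).card - (lS n v).card := by
    rw [Φ, Scomp, Scomp, gg_union (Bse_shf_disj n 3 hsu), gg_union (Bse_shf_disj n 4 hsv),
      Bse3_eq, Bse4_eq]
    simp only [gd3, gd4, one_mul]
    have g0 : gg (2 * 4^n) (Finset.Ico 0 (4^n) ∪ Finset.Ico (2 * 4^n) (3 * 4^n)) =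
        gg (2 * 4^n) (Finset.Ico 0 (4^n)) + gg (2 * 4^n) (Finset.Ico (2 * 4^n) (3 * 4^n)) :=
      gg_union (by
        rw [Finset.disjoint_left]
        intro x hx hx'
        simp only [Finset.mem_Ico] at hx hx'
        omega) _
    have g1 : gg (2 * 4^n) (Finset.Ico 0 (2 * 4^n)) = ((2 * 4^n : ℕ) : ℤ) - (0:ℕ) :=
      gg_Ico_high (by omega) (by omega)
    have g2 : gg (2 * 4^n) (Finset.Ico 0 (4^n)) = ((4^n : ℕ) : ℤ) - (0:ℕ) :=
      gg_Ico_high (by omega) (by omega)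
    have g3 : gg (2 * 4^n) (Finset.Ico (2 * 4^n) (3 * 4^n)) = ((2 * 4^n : ℕ) : ℤ) - (3 * 4^n : ℕ) :=
      gg_Ico_low (by omega) (by omega)
    have g4 : gg (2 * 4^n) (shf (2 * 4^n) (lS n u)) = -((lS n u).card : ℤ) :=
      gg_shf_low hsu (by omega)
    have g5 : gg (2 * 4^n) (shf (4^n) (lS n v)) = ((lS n v).card : ℤ) :=
      gg_shf_high hsv (by omega)
    rw [g0, g1, g2, g3, g4, g5]
    push_cast
    ring
  rw [hΦ]
  have hd : ((laaksoGraph (n+1)).dist (κ n 3 u) (κ n 4 v) : ℤ) ≤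
      2 * (4:ℤ)^n - (lS n u).card - (lS n v).card := by
    have h := SimpleGraph.dist_le (w1.append w2.reverse)
    replace h : (laaksoGraph (n+1)).dist (κ n 3 u) (κ n 4 v) ≤ w1.length + w2.length := by have hl : (w1.append w2.reverse).length = w1.length + w2.length := (Walk.length_append w1 w2.reverse).trans (congrArg (w1.length + ·) (Walk.length_reverse w2)); omega
    have hc : ((4:ℤ)^n : ℤ) = ((4^n : ℕ) : ℤ) := by push_cast; ring
    rw [hc]
    have h2 : (((laaksoGraph (n+1)).dist (κ n 3 u) (κ n 4 v)) : ℤ) ≤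
        ((w1.length + w2.length : ℕ) : ℤ) := by exact_mod_cast h
    omega
  omega

lemma cross14 (n : ℕ) (u v : (laaksoPre n).V) : MainS (n+1) (κ n 1 u) (κ n 4 v) := by
  have hp : 0 < 4^n := by positivity
  have hsu := lS_subset n u
  have hsv := lS_subset n v
  have hcu : (lS n u).card ≤ 4^n := by simpa using Finset.card_le_card hsu
  have hcv : (lS n v).card ≤ 4^n := by simpa using Finset.card_le_card hsv
  have hΦ1 : Φ (4^n) (lS (n+1) (κ n 1 u)) (lS (n+1) (κ n 4 v)) =
      (4:ℤ)^n - (lS n u).card + (lS n v).card := by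
    rw [Φ, Scomp, Scomp, gg_union (Bse_shf_disj n 1 hsu), gg_union (Bse_shf_disj n 4 hsv),
      Bse1_eq, Bse4_eq]
    simp only [gd1, gd4, one_mul]
    have g0 : gg (4^n) (Finset.Ico 0 (4^n) ∪ Finset.Ico (2 * 4^n) (3 * 4^n)) =
        gg (4^n) (Finset.Ico 0 (4^n)) + gg (4^n) (Finset.Ico (2 * 4^n) (3 * 4^n)) :=
      gg_union (by
        rw [Finset.disjoint_left]
        intro x hx hx'
        simp only [Finset.mem_Ico] at hx hx'
        omega) _
    have g1 : gg (4^n) (Finset.Ico 0 (4^n)) = ((4^n : ℕ) : ℤ) - (0:ℕ) :=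
      gg_Ico_high (by omega) (by omega)
    have g2 : gg (4^n) (Finset.Ico (2 * 4^n) (3 * 4^n)) = ((2 * 4^n : ℕ) : ℤ) - (3 * 4^n : ℕ) :=
      gg_Ico_low (by omega) (by omega)
    have g3 : gg (4^n) (shf (4^n) (lS n u)) = -((lS n u).card : ℤ) :=
      gg_shf_low hsu (by omega)
    have g4 : gg (4^n) (shf (4^n) (lS n v)) = -((lS n v).card : ℤ) :=
      gg_shf_low hsv (by omega)
    rw [g0, g1, g2, g3, g4]
    push_cast
    ring
  have hΦ2 : Φ (2 * 4^n) (lS (n+1) (κ n 1 u)) (lS (n+1) (κ n 4 v)) =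
      (4:ℤ)^n + (lS n u).card - (lS n v).card := by
    rw [Φ, Scomp, Scomp, gg_union (Bse_shf_disj n 1 hsu), gg_union (Bse_shf_disj n 4 hsv),
      Bse1_eq, Bse4_eq]
    simp only [gd1, gd4, one_mul]
    have g0 : gg (2 * 4^n) (Finset.Ico 0 (4^n) ∪ Finset.Ico (2 * 4^n) (3 * 4^n)) =
        gg (2 * 4^n) (Finset.Ico 0 (4^n)) + gg (2 * 4^n) (Finset.Ico (2 * 4^n) (3 * 4^n)) :=
      gg_union (by
        rw [Finset.disjoint_left]
        intro x hx hx'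
        simp only [Finset.mem_Ico] at hx hx'
        omega) _
    have g1 : gg (2 * 4^n) (Finset.Ico 0 (4^n)) = ((4^n : ℕ) : ℤ) - (0:ℕ) :=
      gg_Ico_high (by omega) (by omega)
    have g2 : gg (2 * 4^n) (Finset.Ico (2 * 4^n) (3 * 4^n)) = ((2 * 4^n : ℕ) : ℤ) - (3 * 4^n : ℕ) :=
      gg_Ico_low (by omega) (by omega)
    have g3 : gg (2 * 4^n) (shf (4^n) (lS n u)) = ((lS n u).card : ℤ) :=
      gg_shf_high hsu (by omega)
    have g4 : gg (2 * 4^n) (shf (4^n) (lS n v)) = ((lS n v).card : ℤ) :=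
      gg_shf_high hsv (by omega)
    rw [g0, g1, g2, g3, g4]
    push_cast
    ring
  have hc4 : ((4:ℤ)^n : ℤ) = ((4^n : ℕ) : ℤ) := by push_cast; ring
  have hroute : ((laaksoGraph (n+1)).dist (κ n 1 u) (κ n 4 v) : ℤ) ≤
      (lS n u).card + 4^n + (lS n v).card ∧
      ((laaksoGraph (n+1)).dist (κ n 1 u) (κ n 4 v) : ℤ) ≤
      3 * ((4^n : ℕ) : ℤ) - (lS n u).card - (lS n v).card := by
    constructor
    · obtain ⟨w1, hw1⟩ := wDownC n 1 u
      obtain ⟨c0, hc0⟩ := wCopy n 2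
      obtain ⟨w2, hw2⟩ := wDownC n 4 v
      have h := SimpleGraph.dist_le ((w1.append c0).append w2.reverse)
      simp only [Walk.length_append, Walk.length_reverse] at h
      replace h : (laaksoGraph (n+1)).dist (κ n 1 u) (κ n 4 v) ≤ (lS n u).card + 4^n + (lS n v).card := by have hl : ((w1.append c0).append w2.reverse).length = w1.length + c0.length + w2.length := (Walk.length_append (w1.append c0) w2.reverse).trans (congrArg₂ (· + ·) (Walk.length_append w1 c0) (Walk.length_reverse w2)); omega
      exact_mod_cast h
    · obtain ⟨w1, hw1⟩ := wUpC n 1 u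
      obtain ⟨c0, hc0⟩ := wCopy n 3
      obtain ⟨w2, hw2⟩ := wUpC n 4 v
      have h := SimpleGraph.dist_le ((w1.append c0).append w2.reverse)
      simp only [Walk.length_append, Walk.length_reverse] at h
      replace h : (laaksoGraph (n+1)).dist (κ n 1 u) (κ n 4 v) ≤ w1.length + 4^n + w2.length := by have hl : ((w1.append c0).append w2.reverse).length = w1.length + c0.length + w2.length := (Walk.length_append (w1.append c0) w2.reverse).trans (congrArg₂ (· + ·) (Walk.length_append w1 c0) (Walk.length_reverse w2)); omega
      have h2 : (((laaksoGraph (n+1)).dist (κ n 1 u) (κ n 4 v)) : ℤ) ≤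
          ((w1.length + 4^n + w2.length : ℕ) : ℤ) := by exact_mod_cast h
      omega
  obtain ⟨hr1, hr2⟩ := hroute
  rcases le_or_gt ((lS n u).card) ((lS n v).card) with hcc | hcc
  · refine ⟨4^n, Or.inl ?_⟩
    rw [hΦ1, hc4]
    rcases le_or_gt ((lS n u).card + (lS n v).card) (4^n) with hr | hr
    · omega
    · omega
  · refine ⟨2 * 4^n, Or.inl ?_⟩
    rw [hΦ2, hc4]
    rcases le_or_gt ((lS n u).card + (lS n v).card) (4^n) with hr | hr
    · omega
    · omega

lemma cross23 (n : ℕ) (u v : (laaksoPre n).V) : MainS (n+1) (κ n 2 u) (κ n 3 v) := by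
  have hp : 0 < 4^n := by positivity
  have hsu := lS_subset n u
  have hsv := lS_subset n v
  have hcu : (lS n u).card ≤ 4^n := by simpa using Finset.card_le_card hsu
  have hcv : (lS n v).card ≤ 4^n := by simpa using Finset.card_le_card hsv
  have hΦ1 : Φ (2 * 4^n) (lS (n+1) (κ n 3 v)) (lS (n+1) (κ n 2 u)) =
      (4:ℤ)^n + (lS n u).card - (lS n v).card := by
    rw [Φ, Scomp, Scomp, gg_union (Bse_shf_disj n 3 hsv), gg_union (Bse_shf_disj n 2 hsu),
      Bse3_eq, Bse2_eq]
    simp only [gd2, gd3]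
    have g1 : gg (2 * 4^n) (Finset.Ico 0 (2 * 4^n)) = ((2 * 4^n : ℕ) : ℤ) - (0:ℕ) :=
      gg_Ico_high (by omega) (by omega)
    have g2 : gg (2 * 4^n) (Finset.Ico 0 (4^n)) = ((4^n : ℕ) : ℤ) - (0:ℕ) :=
      gg_Ico_high (by omega) (by omega)
    have g3 : gg (2 * 4^n) (shf (2 * 4^n) (lS n v)) = -((lS n v).card : ℤ) :=
      gg_shf_low hsv (by omega)
    have g4 : gg (2 * 4^n) (shf (2 * 4^n) (lS n u)) = -((lS n u).card : ℤ) :=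
      gg_shf_low hsu (by omega)
    rw [g1, g2, g3, g4]
    push_cast
    ring
  have hΦ2 : Φ (3 * 4^n) (lS (n+1) (κ n 3 v)) (lS (n+1) (κ n 2 u)) =
      (4:ℤ)^n + (lS n v).card - (lS n u).card := by
    rw [Φ, Scomp, Scomp, gg_union (Bse_shf_disj n 3 hsv), gg_union (Bse_shf_disj n 2 hsu),
      Bse3_eq, Bse2_eq]
    simp only [gd2, gd3]
    have g1 : gg (3 * 4^n) (Finset.Ico 0 (2 * 4^n)) = ((2 * 4^n : ℕ) : ℤ) - (0:ℕ) :=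
      gg_Ico_high (by omega) (by omega)
    have g2 : gg (3 * 4^n) (Finset.Ico 0 (4^n)) = ((4^n : ℕ) : ℤ) - (0:ℕ) :=
      gg_Ico_high (by omega) (by omega)
    have g3 : gg (3 * 4^n) (shf (2 * 4^n) (lS n v)) = ((lS n v).card : ℤ) :=
      gg_shf_high hsv (by omega)
    have g4 : gg (3 * 4^n) (shf (2 * 4^n) (lS n u)) = ((lS n u).card : ℤ) :=
      gg_shf_high hsu (by omega)
    rw [g1, g2, g3, g4]
    push_cast
    ring
  have hc4 : ((4:ℤ)^n : ℤ) = ((4^n : ℕ) : ℤ) := by push_cast; ring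
  have hroute : ((laaksoGraph (n+1)).dist (κ n 2 u) (κ n 3 v) : ℤ) ≤
      (lS n u).card + 4^n + (lS n v).card ∧
      ((laaksoGraph (n+1)).dist (κ n 2 u) (κ n 3 v) : ℤ) ≤
      3 * ((4^n : ℕ) : ℤ) - (lS n u).card - (lS n v).card := by
    constructor
    · obtain ⟨w1, hw1⟩ := wDownC n 2 u
      obtain ⟨c0, hc0⟩ := wCopy n 1
      obtain ⟨w2, hw2⟩ := wDownC n 3 v
      have h := SimpleGraph.dist_le ((w1.append c0).append w2.reverse)
      simp only [Walk.length_append, Walk.length_reverse] at h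
      replace h : (laaksoGraph (n+1)).dist (κ n 2 u) (κ n 3 v) ≤ (lS n u).card + 4^n + (lS n v).card := by have hl : ((w1.append c0).append w2.reverse).length = w1.length + c0.length + w2.length := (Walk.length_append (w1.append c0) w2.reverse).trans (congrArg₂ (· + ·) (Walk.length_append w1 c0) (Walk.length_reverse w2)); omega
      exact_mod_cast h
    · obtain ⟨w1, hw1⟩ := wUpC n 2 u
      obtain ⟨c0, hc0⟩ := wCopy n 4
      obtain ⟨w2, hw2⟩ := wUpC n 3 v
      have h := SimpleGraph.dist_le ((w1.append c0).append w2.reverse)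
      simp only [Walk.length_append, Walk.length_reverse] at h
      replace h : (laaksoGraph (n+1)).dist (κ n 2 u) (κ n 3 v) ≤ w1.length + 4^n + w2.length := by have hl : ((w1.append c0).append w2.reverse).length = w1.length + c0.length + w2.length := (Walk.length_append (w1.append c0) w2.reverse).trans (congrArg₂ (· + ·) (Walk.length_append w1 c0) (Walk.length_reverse w2)); omega
      have h2 : (((laaksoGraph (n+1)).dist (κ n 2 u) (κ n 3 v)) : ℤ) ≤
          ((w1.length + 4^n + w2.length : ℕ) : ℤ) := by exact_mod_cast h
      omega
  obtain ⟨hr1, hr2⟩ := hroute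
  rcases le_or_gt ((lS n v).card) ((lS n u).card) with hcc | hcc
  · refine ⟨2 * 4^n, Or.inr ?_⟩
    rw [hΦ1, hc4]
    rcases le_or_gt ((lS n u).card + (lS n v).card) (4^n) with hr | hr
    · omega
    · omega
  · refine ⟨3 * 4^n, Or.inr ?_⟩
    rw [hΦ2, hc4]
    rcases le_or_gt ((lS n u).card + (lS n v).card) (4^n) with hr | hr
    · omega
    · omega


lemma main0bt : MainS 0 (bot 0) (topv 0) := by
  refine ⟨1, Or.inr ?_⟩
  have h1 : Φ 1 (lS 0 (topv 0)) (lS 0 (bot 0)) = 1 := by decide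
  rw [h1]
  have h2 := SimpleGraph.dist_le ((adj_st 0 (0 : Fin 1)).toWalk)
  have h3 : (laaksoGraph 0).dist (bot 0) (topv 0) ≤ 1 := h2
  omega

lemma mainLemma : ∀ n (u v : (laaksoPre n).V), MainS n u v := by
  intro n
  induction n with
  | zero =>
    intro u v
    by_cases hu : (show Fin 2 from u) = 0 <;> by_cases hv : (show Fin 2 from v) = 0
    · have h1 : u = bot 0 := hu
      have h2 : v = bot 0 := hv
      rw [h1, h2]; exact mainRefl _
    · have h1 : u = bot 0 := hu
      have h2 : v = topv 0 := by
        have : (show Fin 2 from v) = 1 := by omega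
        exact this
      rw [h1, h2]; exact main0bt
    · have h1 : u = topv 0 := by
        have : (show Fin 2 from u) = 1 := by omega
        exact this
      have h2 : v = bot 0 := hv
      rw [h1, h2]; exact mainSymm main0bt
    · have h1 : u = topv 0 := by
        have : (show Fin 2 from u) = 1 := by omega
        exact this
      have h2 : v = topv 0 := by
        have : (show Fin 2 from v) = 1 := by omega
        exact this
      rw [h1, h2]; exact mainRefl _
  | succ n ih =>
    intro u v
    obtain ⟨k, u1, rfl⟩ := κ_surj n u
    obtain ⟨k', v1, rfl⟩ := κ_surj n v
    by_cases hk : k = k'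
    · subst hk
      exact sameCopy n k u1 v1 (ih u1 v1)
    · fin_cases k <;> fin_cases k'
      · exact absurd rfl hk
      · exact cross01 n u1 v1
      · exact cross02 n u1 v1
      · exact cross03 n u1 v1
      · exact cross04 n u1 v1
      · exact cross05 n u1 v1
      · exact mainSymm (cross01 n v1 u1)
      · exact absurd rfl hk
      · exact cross12 n u1 v1
      · exact cross13 n u1 v1
      · exact cross14 n u1 v1
      · exact cross15 n u1 v1
      · exact mainSymm (cross02 n v1 u1)
      · exact mainSymm (cross12 n v1 u1)
      · exact absurd rfl hk
      · exact cross23 n u1 v1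
      · exact cross24 n u1 v1
      · exact cross25 n u1 v1
      · exact mainSymm (cross03 n v1 u1)
      · exact mainSymm (cross13 n v1 u1)
      · exact mainSymm (cross23 n v1 u1)
      · exact absurd rfl hk
      · exact cross34 n u1 v1
      · exact cross35 n u1 v1
      · exact mainSymm (cross04 n v1 u1)
      · exact mainSymm (cross14 n v1 u1)
      · exact mainSymm (cross24 n v1 u1)
      · exact mainSymm (cross34 n v1 u1)
      · exact absurd rfl hk
      · exact cross45 n u1 v1
      · exact mainSymm (cross05 n v1 u1)
      · exact mainSymm (cross15 n v1 u1)
      · exact mainSymm (cross25 n v1 u1)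
      · exact mainSymm (cross35 n v1 u1)
      · exact mainSymm (cross45 n v1 u1)
      · exact absurd rfl hk


section analytic

variable {X : Type*} [NormedAddCommGroup X] [NormedSpace ℝ X]

lemma normf_adj (n : ℕ) (eh : ℕ → X) (heh : ∀ i, ‖eh i‖ ≤ 1)
    {u v : (laaksoPre n).V} (h : (laaksoGraph n).Adj u v) :
    ‖∑ i ∈ lS n u, eh i - ∑ i ∈ lS n v, eh i‖ ≤ 1 := by
  obtain ⟨hne, he⟩ := adj_iff.1 h
  have key : ∀ (a b : (laaksoPre n).V) (e : (laaksoPre n).E),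
      (laaksoPre n).s e = a → (laaksoPre n).t e = b →
      ‖∑ i ∈ lS n a, eh i - ∑ i ∈ lS n b, eh i‖ ≤ 1 := by
    intro a b e hs ht
    obtain ⟨h1, h2⟩ := edgeProp n e
    rw [hs] at h1 h2
    rw [ht] at h2
    rw [h2, Finset.sum_insert (hs ▸ h1)]
    have : ∑ i ∈ lS n a, eh i - (eh (lI n e) + ∑ i ∈ lS n a, eh i) = -(eh (lI n e)) := by
      abel
    rw [this, norm_neg]
    exact heh _
  rcases he with ⟨e, hs, ht⟩ | ⟨e, hs, ht⟩
  · exact key u v e hs ht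
  · rw [norm_sub_rev]
    exact key v u e hs ht

lemma normf_walk (n : ℕ) (eh : ℕ → X) (heh : ∀ i, ‖eh i‖ ≤ 1)
    {u v : (laaksoPre n).V} (w : (laaksoGraph n).Walk u v) :
    ‖∑ i ∈ lS n u, eh i - ∑ i ∈ lS n v, eh i‖ ≤ w.length := by
  induction w with
  | nil => simp
  | @cons a b c h p ih =>
    have h1 := normf_adj n eh heh h
    have h2 : ‖∑ i ∈ lS n a, eh i - ∑ i ∈ lS n c, eh i‖ ≤
        ‖∑ i ∈ lS n a, eh i - ∑ i ∈ lS n b, eh i‖ +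
        ‖∑ i ∈ lS n b, eh i - ∑ i ∈ lS n c, eh i‖ := norm_sub_le_norm_sub_add_norm_sub _ _ _
    rw [Walk.length_cons]
    push_cast
    linarith

lemma normf_upper (n : ℕ) (eh : ℕ → X) (heh : ∀ i, ‖eh i‖ ≤ 1)
    (u v : (laaksoPre n).V) :
    ‖∑ i ∈ lS n u, eh i - ∑ i ∈ lS n v, eh i‖ ≤ ((laaksoGraph n).dist u v : ℝ) := by
  obtain ⟨w, hw⟩ := (laakso_reachable n u v).exists_walk_length_eq_dist
  have := normf_walk n eh heh w
  rw [hw] at this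
  exact this

lemma sum_norm_le_card (eh : ℕ → X) (heh : ∀ i, ‖eh i‖ ≤ 1) (S : Finset ℕ) :
    ‖∑ i ∈ S, eh i‖ ≤ (S.card : ℝ) := by
  calc ‖∑ i ∈ S, eh i‖ ≤ ∑ i ∈ S, ‖eh i‖ := norm_sum_le _ _
  _ ≤ ∑ _i ∈ S, (1:ℝ) := Finset.sum_le_sum (fun i _ => heh i)
  _ = S.card := by simp

lemma lower_key (m J : ℕ) (eh : ℕ → X) (heh : ∀ i, ‖eh i‖ ≤ 1) (ε : ℝ)
    (Xs Ys : Finset ℕ) (hXs : Xs ⊆ Finset.range m) (hYs : Ys ⊆ Finset.range m)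
    (hT : (m:ℝ) - ε ≤ ‖(∑ i ∈ (Finset.range m).filter (· < J), eh i) -
        ∑ i ∈ (Finset.range m).filter (fun i => ¬ i < J), eh i‖) :
    (Φ J Xs Ys : ℝ) - ε ≤ ‖∑ i ∈ Xs, eh i - ∑ i ∈ Ys, eh i‖ := by
  classical
  set P := Xs \ Ys with hP
  set M := Ys \ Xs with hM
  set D := P ∪ M with hD
  set R := Finset.range m \ D with hR
  have hPM : Disjoint P M := disjoint_sdiff_sdiff
  have hDsub : D ⊆ Finset.range m := by
    rw [hD]
    exact Finset.union_subset (le_trans (Finset.sdiff_subset) hXs)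
      (le_trans (Finset.sdiff_subset) hYs)
  have hRD : Disjoint R D := Finset.sdiff_disjoint
  have hRDU : Finset.range m = R ∪ D := by
    rw [hR, Finset.sdiff_union_of_subset hDsub]
  -- the sum identity
  have hfu : ∑ i ∈ Xs, eh i - ∑ i ∈ Ys, eh i = ∑ i ∈ P, eh i - ∑ i ∈ M, eh i := by
    have h1 : ∑ i ∈ Xs \ (Xs ∩ Ys), eh i + ∑ i ∈ Xs ∩ Ys, eh i = ∑ i ∈ Xs, eh i :=
      Finset.sum_sdiff (Finset.inter_subset_left)
    have h2 : ∑ i ∈ Ys \ (Xs ∩ Ys), eh i + ∑ i ∈ Xs ∩ Ys, eh i = ∑ i ∈ Ys, eh i :=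
      Finset.sum_sdiff (Finset.inter_subset_right)
    have e1 : Xs \ (Xs ∩ Ys) = P := by rw [Finset.sdiff_inter_self_left]
    have e2 : Ys \ (Xs ∩ Ys) = M := by
      rw [Finset.inter_comm, Finset.sdiff_inter_self_left]
    rw [e1] at h1
    rw [e2] at h2
    rw [← h1, ← h2]
    abel
  -- split T
  have hsplit : ∀ (p : ℕ → Prop) [DecidablePred p],
      ∑ i ∈ (Finset.range m).filter p, eh i =
      ∑ i ∈ R.filter p, eh i + ∑ i ∈ P.filter p, eh i + ∑ i ∈ M.filter p, eh i := by
    intro p hp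
    rw [hRDU, Finset.filter_union, Finset.sum_union (Finset.disjoint_filter_filter hRD),
      hD, Finset.filter_union, Finset.sum_union (Finset.disjoint_filter_filter hPM), add_assoc]
  have hPsplit : ∑ i ∈ P, eh i =
      ∑ i ∈ P.filter (· < J), eh i + ∑ i ∈ P.filter (fun i => ¬ i < J), eh i :=
    (Finset.sum_filter_add_sum_filter_not _ _ _).symm
  have hMsplit : ∑ i ∈ M, eh i =
      ∑ i ∈ M.filter (· < J), eh i + ∑ i ∈ M.filter (fun i => ¬ i < J), eh i :=
    (Finset.sum_filter_add_sum_filter_not _ _ _).symm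
  have hdiff : (∑ i ∈ (Finset.range m).filter (· < J), eh i) -
      (∑ i ∈ (Finset.range m).filter (fun i => ¬ i < J), eh i) -
      (∑ i ∈ Xs, eh i - ∑ i ∈ Ys, eh i) =
      (∑ i ∈ R.filter (· < J), eh i - ∑ i ∈ R.filter (fun i => ¬ i < J), eh i)
      + ((∑ i ∈ M.filter (· < J), eh i) + (∑ i ∈ M.filter (· < J), eh i))
      - ((∑ i ∈ P.filter (fun i => ¬ i < J), eh i) + (∑ i ∈ P.filter (fun i => ¬ i < J), eh i)) := by
    rw [hfu, hsplit (· < J), hsplit (fun i => ¬ i < J), hPsplit, hMsplit]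
    abel
  have hnd : ‖(∑ i ∈ (Finset.range m).filter (· < J), eh i) -
      (∑ i ∈ (Finset.range m).filter (fun i => ¬ i < J), eh i) -
      (∑ i ∈ Xs, eh i - ∑ i ∈ Ys, eh i)‖ ≤
      (R.card : ℝ) + 2 * (M.filter (· < J)).card + 2 * (P.filter (fun i => ¬ i < J)).card := by
    rw [hdiff]
    have b1 := sum_norm_le_card eh heh (R.filter (· < J))
    have b2 := sum_norm_le_card eh heh (R.filter (fun i => ¬ i < J))
    have b3 := sum_norm_le_card eh heh (M.filter (· < J))
    have b4 := sum_norm_le_card eh heh (P.filter (fun i => ¬ i < J))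
    have hcR : (R.filter (· < J)).card + (R.filter (fun i => ¬ i < J)).card = R.card :=
      Finset.card_filter_add_card_filter_not _
    have hcRle : ((R.filter (· < J)).card : ℝ) + ((R.filter (fun i => ¬ i < J)).card : ℝ) =
        (R.card : ℝ) := by exact_mod_cast congrArg (Nat.cast : ℕ → ℝ) hcR
    set A1 := ∑ i ∈ R.filter (· < J), eh i
    set A2 := ∑ i ∈ R.filter (fun i => ¬ i < J), eh i
    set B := ∑ i ∈ M.filter (· < J), eh i
    set C := ∑ i ∈ P.filter (fun i => ¬ i < J), eh i
    have t1 : ‖A1 - A2 + (B + B) - (C + C)‖ ≤ ‖A1‖ + ‖A2‖ + 2 * ‖B‖ + 2 * ‖C‖ := by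
      have u1 := norm_sub_le (A1 - A2 + (B + B)) (C + C)
      have u2 := norm_add_le (A1 - A2) (B + B)
      have u3 := norm_sub_le A1 A2
      have u4 := norm_add_le B B
      have u5 := norm_add_le C C
      linarith
    calc ‖A1 - A2 + (B + B) - (C + C)‖ ≤ ‖A1‖ + ‖A2‖ + 2 * ‖B‖ + 2 * ‖C‖ := t1
      _ ≤ _ := by linarith
  have hΦPM : Φ J Xs Ys = Φ J P M := by
    have dx : Disjoint P (Xs ∩ Ys) := by
      rw [Finset.disjoint_left]
      intro a ha hb
      rw [hP, Finset.mem_sdiff] at ha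
      exact ha.2 (Finset.mem_inter.1 hb).2
    have dy : Disjoint M (Xs ∩ Ys) := by
      rw [Finset.disjoint_left]
      intro a ha hb
      rw [hM, Finset.mem_sdiff] at ha
      exact ha.2 (Finset.mem_inter.1 hb).1
    have ex : Xs = P ∪ (Xs ∩ Ys) := by rw [hP, Finset.sdiff_union_inter]
    have ey : Ys = M ∪ (Xs ∩ Ys) := by
      rw [hM]
      rw [show Xs ∩ Ys = Ys ∩ Xs from Finset.inter_comm _ _, Finset.sdiff_union_inter]
    have gx : gg J Xs = gg J P + gg J (Xs ∩ Ys) := by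
      conv_lhs => rw [ex]
      exact gg_union dx _
    have gy : gg J Ys = gg J M + gg J (Xs ∩ Ys) := by
      conv_lhs => rw [ey]
      exact gg_union dy _
    rw [Φ, Φ, gx, gy]
    ring
  have hcard : (m : ℤ) - Φ J P M = (R.card : ℤ) + 2 * (M.filter (· < J)).card
      + 2 * (P.filter (fun i => ¬ i < J)).card := by
    have c1 : (P.filter (· < J)).card + (P.filter (fun i => ¬ i < J)).card = P.card :=
      Finset.card_filter_add_card_filter_not _
    have c2 : (M.filter (· < J)).card + (M.filter (fun i => ¬ i < J)).card = M.card :=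
      Finset.card_filter_add_card_filter_not _
    have c3 : R.card + D.card = m := by
      rw [hR, Finset.card_sdiff_of_subset hDsub, Finset.card_range]
      have := Finset.card_le_card hDsub
      rw [Finset.card_range] at this
      omega
    have c4 : D.card = P.card + M.card := Finset.card_union_of_disjoint hPM
    rw [Φ, gg, gg]
    push_cast
    omega
  -- conclude
  have hc : ((m : ℝ) : ℝ) - (Φ J P M : ℝ) = (R.card : ℝ) + 2 * (M.filter (· < J)).card
      + 2 * (P.filter (fun i => ¬ i < J)).card := by
    exact_mod_cast congrArg (Int.cast : ℤ → ℝ) hcard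
  have tri : ‖(∑ i ∈ (Finset.range m).filter (· < J), eh i) -
      ∑ i ∈ (Finset.range m).filter (fun i => ¬ i < J), eh i‖ ≤
      ‖(∑ i ∈ (Finset.range m).filter (· < J), eh i) -
      (∑ i ∈ (Finset.range m).filter (fun i => ¬ i < J), eh i) -
      (∑ i ∈ Xs, eh i - ∑ i ∈ Ys, eh i)‖ + ‖∑ i ∈ Xs, eh i - ∑ i ∈ Ys, eh i‖ := by
    have := norm_sub_le ((∑ i ∈ (Finset.range m).filter (· < J), eh i) -
      (∑ i ∈ (Finset.range m).filter (fun i => ¬ i < J), eh i) -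
      (∑ i ∈ Xs, eh i - ∑ i ∈ Ys, eh i)) (-(∑ i ∈ Xs, eh i - ∑ i ∈ Ys, eh i))
    simp only [sub_neg_eq_add, sub_add_cancel, norm_neg] at this
    exact this
  rw [hΦPM]
  linarith

end analytic


end Laakso


open Laakso in
/-- **Theorem 1.** If `X` is a Banach space that is not super-reflexive (expressed via the
J-convexity-failure condition of James and Schaffer–Sullivan), then for each `ε > 0` and
`n ≥ 1` the Laakso graph `𝓛ₙ` admits a map `f : 𝓛ₙ → X` with
`(1/2) d(a,b) − ε ≤ ‖f a − f b‖ ≤ d(a,b)` for all vertices `a, b`. -/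
theorem laakso_stmt2 {X : Type*} [NormedAddCommGroup X] [NormedSpace ℝ X] [CompleteSpace X]
    (hX : ∀ m : ℕ, 1 ≤ m → ∀ ε : ℝ, 0 < ε → ∃ e : Fin m → X,
      (∀ i, ‖e i‖ ≤ 1) ∧ ∀ j : Fin m,
        ‖(∑ i ∈ Finset.univ.filter (fun i => i ≤ j), e i)
          - ∑ i ∈ Finset.univ.filter (fun i => j < i), e i‖ ≥ (m : ℝ) - ε)
    (ε : ℝ) (hε : 0 < ε) (n : ℕ) (hn : 1 ≤ n) :
    ∃ f : (laaksoPre n).V → X, ∀ a b : (laaksoPre n).V,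
      (1 / 2) * laaksoDist n a b - ε ≤ ‖f a - f b‖ ∧ ‖f a - f b‖ ≤ laaksoDist n a b := by
  classical
  set m := 4^n with hm_def
  have hm : 1 ≤ m := Nat.one_le_pow _ _ (by norm_num)
  obtain ⟨e, he1, he2⟩ := hX m hm ε hε
  set eh : ℕ → X := fun i => if h : i < m then e ⟨i, h⟩ else 0 with eh_def
  have heh : ∀ i, ‖eh i‖ ≤ 1 := by
    intro i
    by_cases h : i < m
    · have hh : eh i = e ⟨i, h⟩ := dif_pos h
      rw [hh]; exact he1 _
    · have hh : eh i = 0 := dif_neg h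
      rw [hh]; simp
  have hbr : ∀ (p : ℕ → Prop) [DecidablePred p],
      ∑ i ∈ Finset.univ.filter (fun i : Fin m => p i.val), e i =
      ∑ i ∈ (Finset.range m).filter p, eh i := by
    intro p hp
    rw [Finset.sum_filter, Finset.sum_filter,
      ← Fin.sum_univ_eq_sum_range (fun i => if p i then eh i else 0) m]
    refine Finset.sum_congr rfl (fun i _ => ?_)
    have hei : eh i.val = e i := dif_pos i.isLt
    rw [hei]
  have hT_all : ∀ J : ℕ, (m:ℝ) - ε ≤ ‖(∑ i ∈ (Finset.range m).filter (· < J), eh i) -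
      ∑ i ∈ (Finset.range m).filter (fun i => ¬ i < J), eh i‖ := by
    intro J
    rcases Nat.eq_zero_or_pos J with rfl | hJ
    · have h1 : (Finset.range m).filter (· < 0) = ∅ :=
        Finset.filter_false_of_mem (fun x _ => by omega)
      have h2 : (Finset.range m).filter (fun i => ¬ i < 0) = Finset.range m :=
        Finset.filter_true_of_mem (fun x _ => by omega)
      rw [h1, h2, Finset.sum_empty, zero_sub, norm_neg]
      have hj := he2 ⟨m - 1, by omega⟩
      have hf1 : Finset.univ.filter (fun i : Fin m => i ≤ ⟨m - 1, by omega⟩) = Finset.univ :=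
        Finset.filter_true_of_mem (fun i _ => by
          rw [Fin.le_def]
          have := i.isLt
          simp only
          omega)
      have hf2 : Finset.univ.filter (fun i : Fin m => (⟨m - 1, by omega⟩ : Fin m) < i) = ∅ :=
        Finset.filter_false_of_mem (fun i _ => by
          rw [Fin.lt_def]
          have := i.isLt
          simp only
          omega)
      rw [hf1, hf2, Finset.sum_empty, sub_zero] at hj
      have hsum : ∑ i : Fin m, e i = ∑ i ∈ Finset.range m, eh i := by
        rw [← Fin.sum_univ_eq_sum_range (fun i => eh i) m]
        refine Finset.sum_congr rfl (fun i _ => ?_)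
        exact (show eh i.val = e i from dif_pos i.isLt).symm
      rw [hsum] at hj
      exact hj
    · set j : Fin m := ⟨min (J - 1) (m - 1), by omega⟩ with hj_def
      have hj := he2 j
      have hjv : (j : ℕ) = min (J - 1) (m - 1) := rfl
      have key1 : ∑ i ∈ Finset.univ.filter (fun i : Fin m => i ≤ j), e i =
          ∑ i ∈ (Finset.range m).filter (· < J), eh i := by
        rw [← hbr (· < J)]
        apply Finset.sum_congr _ (fun _ _ => rfl)
        apply Finset.filter_congr
        intro i _
        have hi := i.isLt
        rw [Fin.le_def, hjv]
        omega
      have key2 : ∑ i ∈ Finset.univ.filter (fun i : Fin m => j < i), e i =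
          ∑ i ∈ (Finset.range m).filter (fun i => ¬ i < J), eh i := by
        rw [← hbr (fun i => ¬ i < J)]
        apply Finset.sum_congr _ (fun _ _ => rfl)
        apply Finset.filter_congr
        intro i _
        have hi := i.isLt
        rw [Fin.lt_def, hjv]
        omega
      rw [key1, key2] at hj
      exact hj
  refine ⟨fun v => ∑ i ∈ lS n v, eh i, fun a b => ⟨?_, ?_⟩⟩
  · -- lower bound
    obtain ⟨J, hor⟩ := mainLemma n a b
    have hda : laaksoDist n a b = (((laaksoGraph n).dist a b : ℕ) : ℝ) := rfl
    rcases hor with h | h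
    · have hlow := lower_key m J eh heh ε (lS n a) (lS n b)
        (lS_subset n a) (lS_subset n b) (hT_all J)
      have hcast : (((laaksoGraph n).dist a b : ℕ) : ℝ) ≤ 2 * ((Φ J (lS n a) (lS n b) : ℤ) : ℝ) := by
        exact_mod_cast h
      rw [hda]
      linarith
    · have hlow := lower_key m J eh heh ε (lS n b) (lS n a)
        (lS_subset n b) (lS_subset n a) (hT_all J)
      have hcast : (((laaksoGraph n).dist a b : ℕ) : ℝ) ≤ 2 * ((Φ J (lS n b) (lS n a) : ℤ) : ℝ) := by
        exact_mod_cast h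
      rw [hda, norm_sub_rev]
      linarith
  · -- upper bound
    exact normf_upper n eh heh a b
end

section
/- For all real numbers s, t with 0 ≤ s ≤ 1 and 0 ≤ t ≤ 1, one has 1 + min(s + t, 2 − s − t) ≤ (4/3)·(1 + s + t − 2st), with equality when s = t = 1/2. -/
/-- **Elementary lemma.** For `0 ≤ s, t ≤ 1`,
`1 + min(s + t, 2 − s − t) ≤ (4/3)(1 + s + t − 2st)`, with equality when `s = t = 1/2`. -/
theorem laakso_stmt4 :
    (∀ s t : ℝ, 0 ≤ s → s ≤ 1 → 0 ≤ t → t ≤ 1 →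
      1 + min (s + t) (2 - s - t) ≤ (4 / 3) * (1 + s + t - 2 * s * t)) ∧
    (1 + min ((1:ℝ)/2 + 1/2) (2 - 1/2 - 1/2) = (4 / 3) * (1 + 1/2 + 1/2 - 2 * (1/2) * (1/2))) := by
  constructor
  · intro s t hs hs1 ht ht1
    rcases le_or_gt (s + t) (2 - s - t) with h | h
    · rw [min_eq_left h]
      nlinarith [mul_nonneg hs ht, sq_nonneg (s - t), sq_nonneg (s + t - 1), mul_nonneg (sub_nonneg.2 hs1) (sub_nonneg.2 ht1)]
    · rw [min_eq_right h.le]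
      nlinarith [sq_nonneg (s - t), sq_nonneg (s + t - 1), mul_nonneg hs ht, mul_nonneg (sub_nonneg.2 hs1) (sub_nonneg.2 ht1)]
  · norm_num
end

section
/- Let f be a mapping from the vertex set of the Laakso graph 𝓛_2 into L^1([0,1]) and let c be a constant such that for all vertices a, b of 𝓛_2: d(a,b) ≤ ‖f(a) − f(b)‖_1 ≤ c·d(a,b), where d is the shortest-path metric on 𝓛_2. Then c ≥ 9/8. -/
open MeasureTheory

/-- Lebesgue measure restricted to `[0,1]`; `Lp ℝ 1` of this measure is `L¹([0,1])`. -/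
noncomputable def μ01 : Measure ℝ := volume.restrict (Set.Icc (0 : ℝ) 1)

/-! ### Auxiliary machinery -/

abbrev VC := ((Fin 2 ⊕ Fin 1 × Fin 4) ⊕ (Fin 1 × Fin 6) × Fin 4)
def mkV : VC → (laaksoPre 2).V := fun x => x
def unV : (laaksoPre 2).V → VC := fun x => x
instance : DecidableEq (laaksoPre 2).V := inferInstanceAs (DecidableEq VC)
instance : Fintype (laaksoPre 2).E := inferInstanceAs (Fintype ((Fin 1 × Fin 6) × Fin 6))
instance : DecidableRel (laaksoGraph 2).Adj := fun a b =>
  decidable_of_iff _ (SimpleGraph.fromRel_adj _ a b).symm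

def mkPhi (m : Fin 2 → ℤ) (mid : Fin 4 → ℤ) (M : Fin 6 → Fin 4 → ℤ) : (laaksoPre 2).V → ℤ :=
  fun v => Sum.elim (Sum.elim m (fun p => mid p.2)) (fun p => M p.1.2 p.2) (unV v)

lemma lip_of_edges (φ : (laaksoPre 2).V → ℤ)
    (h : ∀ e : (laaksoPre 2).E, |φ ((laaksoPre 2).s e) - φ ((laaksoPre 2).t e)| ≤ 1) :
    ∀ a b, (laaksoGraph 2).Adj a b → |φ a - φ b| ≤ 1 := by
  intro a b hab
  simp only [laaksoGraph, SimpleGraph.fromRel_adj] at hab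
  obtain ⟨-, ⟨e, rfl, rfl⟩ | ⟨e, rfl, rfl⟩⟩ := hab
  · exact h e
  · rw [abs_sub_comm]; exact h e

lemma walk_potential {V : Type} {G : SimpleGraph V} (φ : V → ℤ)
    (hφ : ∀ a b, G.Adj a b → |φ a - φ b| ≤ 1) {u v : V} (p : G.Walk u v) :
    |φ u - φ v| ≤ (p.length : ℤ) := by
  induction p with
  | nil => simp
  | @cons a b c h p ih =>
      have h1 := hφ a b h
      have h2 : |φ a - φ c| ≤ |φ a - φ b| + |φ b - φ c| := abs_sub_le _ _ _
      simp only [SimpleGraph.Walk.length_cons]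
      push_cast
      omega

lemma dist_lower {V : Type} {G : SimpleGraph V} (φ : V → ℤ)
    (hφ : ∀ a b, G.Adj a b → |φ a - φ b| ≤ 1) {u v : V} (hr : G.Reachable u v) :
    |φ u - φ v| ≤ (G.dist u v : ℤ) := by
  obtain ⟨p, hp⟩ := hr.exists_walk_length_eq_dist
  rw [← hp]
  exact walk_potential φ hφ p

/-! ### The threshold (cut) representation of distances on `ℝ` -/

noncomputable def stp (a t : ℝ) : ℝ := if t < a then 1 else 0

lemma stepAbs (a b t : ℝ) : |stp a t - stp b t|
    = Set.indicator (Set.Ico (min a b) (max a b)) (fun _ => (1:ℝ)) t := by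
  rcases le_total a b with h | h <;>
    unfold stp <;>
    by_cases h1 : t < a <;> by_cases h2 : t < b <;>
    simp [Set.indicator_apply, Set.mem_Ico, min_def, max_def, h, h1, h2, abs_of_nonneg,
      abs_of_nonpos] <;>
    first
      | linarith
      | (intro hh; linarith)
      | (rw [if_pos (by linarith)])
      | (rw [if_neg (by linarith)])

lemma integrable_stepAbs (a b : ℝ) : Integrable (fun t => |stp a t - stp b t|) volume := by
  simp only [stepAbs]
  exact (integrable_indicator_iff measurableSet_Ico).2
    (integrableOn_const measure_Ico_lt_top.ne)

lemma integral_stepAbs (a b : ℝ) : ∫ t, |stp a t - stp b t| = |a - b| := by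
  simp only [stepAbs]
  rw [integral_indicator measurableSet_Ico]
  simp [Real.volume_Ico]
  rcases le_total a b with h | h <;>
    simp [max_eq_right h, min_eq_left h, max_eq_left h, min_eq_right h,
      abs_of_nonneg, abs_of_nonpos, sub_nonneg, sub_nonpos, h, ENNReal.toReal_ofReal] <;>
  rw [abs_sub_comm] <;> rw [abs_of_nonneg (by linarith)]

lemma stp01 (a t : ℝ) : stp a t = 0 ∨ stp a t = 1 := by unfold stp; split <;> simp

/-! ### The combinatorial certificate, first for `{0,1}`-valued points -/

set_option maxHeartbeats 1000000 in
lemma bool01 (v0 v1 v2 v3 v4 v5 v6 v7 : ℝ)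
    (h0 : v0 = 0 ∨ v0 = 1) (h1 : v1 = 0 ∨ v1 = 1) (h2 : v2 = 0 ∨ v2 = 1) (h3 : v3 = 0 ∨ v3 = 1)
    (h4 : v4 = 0 ∨ v4 = 1) (h5 : v5 = 0 ∨ v5 = 1) (h6 : v6 = 0 ∨ v6 = 1) (h7 : v7 = 0 ∨ v7 = 1) :
    |v0 - v1| + |v2 - v3| + |v4 - v5| + |v6 - v7|
      + (|v0 - v6| + |v0 - v7| + |v1 - v6| + |v1 - v7|)
      + (|v2 - v4| + |v2 - v5| + |v3 - v4| + |v3 - v5|)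
    ≤ (|v0 - v2| + |v0 - v3| + |v1 - v2| + |v1 - v3|)
      + (|v4 - v6| + |v4 - v7| + |v5 - v6| + |v5 - v7|)
      + (|v0 - v4| + |v0 - v5| + |v1 - v4| + |v1 - v5|)
      + (|v2 - v6| + |v2 - v7| + |v3 - v6| + |v3 - v7|) := by
  rcases h0 with rfl | rfl <;> rcases h1 with rfl | rfl <;> rcases h2 with rfl | rfl <;>
    rcases h3 with rfl | rfl <;> rcases h4 with rfl | rfl <;> rcases h5 with rfl | rfl <;>
    rcases h6 with rfl | rfl <;> rcases h7 with rfl | rfl <;>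
    simp [sub_self, sub_zero, zero_sub, abs_neg] <;> norm_num

/-! ### The certificate for arbitrary reals, by integrating over thresholds -/

lemma realIneq (x0 x1 x2 x3 x4 x5 x6 x7 : ℝ) :
    |x0 - x1| + |x2 - x3| + |x4 - x5| + |x6 - x7|
      + (|x0 - x6| + |x0 - x7| + |x1 - x6| + |x1 - x7|)
      + (|x2 - x4| + |x2 - x5| + |x3 - x4| + |x3 - x5|)
    ≤ (|x0 - x2| + |x0 - x3| + |x1 - x2| + |x1 - x3|)
      + (|x4 - x6| + |x4 - x7| + |x5 - x6| + |x5 - x7|)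
      + (|x0 - x4| + |x0 - x5| + |x1 - x4| + |x1 - x5|)
      + (|x2 - x6| + |x2 - x7| + |x3 - x6| + |x3 - x7|) := by
  let cL : Fin 12 → ℝ × ℝ := ![(x0,x1),(x2,x3),(x4,x5),(x6,x7),(x0,x6),(x0,x7),(x1,x6),(x1,x7),
    (x2,x4),(x2,x5),(x3,x4),(x3,x5)]
  let cS : Fin 16 → ℝ × ℝ := ![(x0,x2),(x0,x3),(x1,x2),(x1,x3),(x4,x6),(x4,x7),(x5,x6),(x5,x7),
    (x0,x4),(x0,x5),(x1,x4),(x1,x5),(x2,x6),(x2,x7),(x3,x6),(x3,x7)]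
  have key : ∑ i, |(cL i).1 - (cL i).2| ≤ ∑ i, |(cS i).1 - (cS i).2| := by
    have e1 : ∑ i, |(cL i).1 - (cL i).2|
        = ∫ t, ∑ i, |stp (cL i).1 t - stp (cL i).2 t| := by
      rw [integral_finset_sum _ (fun i _ => integrable_stepAbs _ _)]
      exact Finset.sum_congr rfl (fun i _ => (integral_stepAbs _ _).symm)
    have e2 : ∑ i, |(cS i).1 - (cS i).2|
        = ∫ t, ∑ i, |stp (cS i).1 t - stp (cS i).2 t| := by
      rw [integral_finset_sum _ (fun i _ => integrable_stepAbs _ _)]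
      exact Finset.sum_congr rfl (fun i _ => (integral_stepAbs _ _).symm)
    rw [e1, e2]
    apply integral_mono (integrable_finset_sum _ (fun i _ => integrable_stepAbs _ _))
      (integrable_finset_sum _ (fun i _ => integrable_stepAbs _ _))
    intro t
    have hb := bool01 (stp x0 t) (stp x1 t) (stp x2 t) (stp x3 t) (stp x4 t) (stp x5 t)
      (stp x6 t) (stp x7 t) (stp01 _ _) (stp01 _ _) (stp01 _ _) (stp01 _ _)
      (stp01 _ _) (stp01 _ _) (stp01 _ _) (stp01 _ _)
    simp only [cL, cS, Fin.sum_univ_succ, Fin.sum_univ_zero, Matrix.cons_val_zero,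
      Matrix.cons_val_succ, Fin.succ_zero_eq_one]
    linarith [hb]
  simp only [cL, cS, Fin.sum_univ_succ, Fin.sum_univ_zero, Matrix.cons_val_zero,
    Matrix.cons_val_succ, Fin.succ_zero_eq_one] at key
  linarith [key]

/-! ### The certificate for `L¹([0,1])` -/

lemma normL1 (u v : Lp ℝ 1 μ01) : ‖u - v‖ = ∫ ω, |u ω - v ω| ∂μ01 := by
  rw [MeasureTheory.L1.norm_eq_integral_norm]
  apply integral_congr_ae
  filter_upwards [Lp.coeFn_sub u v] with ω h
  rw [h]; simp [Real.norm_eq_abs]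

lemma intAbsSub (u v : Lp ℝ 1 μ01) : Integrable (fun ω => |u ω - v ω|) μ01 :=
  ((L1.integrable_coeFn u).sub (L1.integrable_coeFn v)).abs

lemma normIneq (g0 g1 g2 g3 g4 g5 g6 g7 : Lp ℝ 1 μ01) :
    ‖g0 - g1‖ + ‖g2 - g3‖ + ‖g4 - g5‖ + ‖g6 - g7‖
      + (‖g0 - g6‖ + ‖g0 - g7‖ + ‖g1 - g6‖ + ‖g1 - g7‖)
      + (‖g2 - g4‖ + ‖g2 - g5‖ + ‖g3 - g4‖ + ‖g3 - g5‖)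
    ≤ (‖g0 - g2‖ + ‖g0 - g3‖ + ‖g1 - g2‖ + ‖g1 - g3‖)
      + (‖g4 - g6‖ + ‖g4 - g7‖ + ‖g5 - g6‖ + ‖g5 - g7‖)
      + (‖g0 - g4‖ + ‖g0 - g5‖ + ‖g1 - g4‖ + ‖g1 - g5‖)
      + (‖g2 - g6‖ + ‖g2 - g7‖ + ‖g3 - g6‖ + ‖g3 - g7‖) := by
  let cL : Fin 12 → Lp ℝ 1 μ01 × Lp ℝ 1 μ01 := ![(g0,g1),(g2,g3),(g4,g5),(g6,g7),(g0,g6),(g0,g7),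
    (g1,g6),(g1,g7),(g2,g4),(g2,g5),(g3,g4),(g3,g5)]
  let cS : Fin 16 → Lp ℝ 1 μ01 × Lp ℝ 1 μ01 := ![(g0,g2),(g0,g3),(g1,g2),(g1,g3),(g4,g6),(g4,g7),
    (g5,g6),(g5,g7),(g0,g4),(g0,g5),(g1,g4),(g1,g5),(g2,g6),(g2,g7),(g3,g6),(g3,g7)]
  have key : ∑ i, ‖(cL i).1 - (cL i).2‖ ≤ ∑ i, ‖(cS i).1 - (cS i).2‖ := by
    have e1 : ∑ i, ‖(cL i).1 - (cL i).2‖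
        = ∫ ω, ∑ i, |(cL i).1 ω - (cL i).2 ω| ∂μ01 := by
      rw [integral_finset_sum _ (fun i _ => intAbsSub _ _)]
      exact Finset.sum_congr rfl (fun i _ => normL1 _ _)
    have e2 : ∑ i, ‖(cS i).1 - (cS i).2‖
        = ∫ ω, ∑ i, |(cS i).1 ω - (cS i).2 ω| ∂μ01 := by
      rw [integral_finset_sum _ (fun i _ => intAbsSub _ _)]
      exact Finset.sum_congr rfl (fun i _ => normL1 _ _)
    rw [e1, e2]
    apply integral_mono (integrable_finset_sum _ (fun i _ => intAbsSub _ _))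
      (integrable_finset_sum _ (fun i _ => intAbsSub _ _))
    intro ω
    have hb := realIneq (g0 ω) (g1 ω) (g2 ω) (g3 ω) (g4 ω) (g5 ω) (g6 ω) (g7 ω)
    simp only [cL, cS, Fin.sum_univ_succ, Fin.sum_univ_zero, Matrix.cons_val_zero,
      Matrix.cons_val_succ, Fin.succ_zero_eq_one]
    linarith [hb]
  simp only [cL, cS, Fin.sum_univ_succ, Fin.sum_univ_zero, Matrix.cons_val_zero,
    Matrix.cons_val_succ, Fin.succ_zero_eq_one] at key
  linarith [key]

/-! ### Concrete vertices, walks and potentials in `𝓛₂` -/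

def w0 : (laaksoPre 2).V := mkV (.inl (.inl 0))
def w1 : (laaksoPre 2).V := mkV (.inl (.inl 1))
def w2 : (laaksoPre 2).V := mkV (.inl (.inr (0, 0)))
def w3 : (laaksoPre 2).V := mkV (.inl (.inr (0, 1)))
def w4 : (laaksoPre 2).V := mkV (.inl (.inr (0, 2)))
def w5 : (laaksoPre 2).V := mkV (.inl (.inr (0, 3)))
def w10 : (laaksoPre 2).V := mkV (.inr ((0, 1), 0))
def w11 : (laaksoPre 2).V := mkV (.inr ((0, 1), 1))
def w12 : (laaksoPre 2).V := mkV (.inr ((0, 1), 2))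
def w13 : (laaksoPre 2).V := mkV (.inr ((0, 1), 3))
def w14 : (laaksoPre 2).V := mkV (.inr ((0, 2), 0))
def w15 : (laaksoPre 2).V := mkV (.inr ((0, 2), 1))
def w16 : (laaksoPre 2).V := mkV (.inr ((0, 2), 2))
def w17 : (laaksoPre 2).V := mkV (.inr ((0, 2), 3))
def w18 : (laaksoPre 2).V := mkV (.inr ((0, 3), 0))
def w19 : (laaksoPre 2).V := mkV (.inr ((0, 3), 1))
def w20 : (laaksoPre 2).V := mkV (.inr ((0, 3), 2))
def w21 : (laaksoPre 2).V := mkV (.inr ((0, 3), 3))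
def w22 : (laaksoPre 2).V := mkV (.inr ((0, 4), 0))
def w23 : (laaksoPre 2).V := mkV (.inr ((0, 4), 1))
def w24 : (laaksoPre 2).V := mkV (.inr ((0, 4), 2))
def w25 : (laaksoPre 2).V := mkV (.inr ((0, 4), 3))

def phi11 : (laaksoPre 2).V → ℤ :=
  mkPhi ![6,10] ![2,2,6,6] ![![5,4,4,3],![1,0,2,1],![3,4,4,5],![3,4,4,5],![7,8,8,7],![7,8,8,9]]
lemma phi11_lip : ∀ a b, (laaksoGraph 2).Adj a b → |phi11 a - phi11 b| ≤ 1 :=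
  lip_of_edges phi11 (by decide)

def phi12 : (laaksoPre 2).V → ℤ :=
  mkPhi ![6,10] ![2,2,6,6] ![![5,4,4,3],![1,2,0,1],![3,4,4,5],![3,4,4,5],![7,8,8,7],![7,8,8,9]]
lemma phi12_lip : ∀ a b, (laaksoGraph 2).Adj a b → |phi12 a - phi12 b| ≤ 1 :=
  lip_of_edges phi12 (by decide)

def phi15 : (laaksoPre 2).V → ℤ :=
  mkPhi ![6,10] ![2,6,2,6] ![![5,4,4,3],![3,4,4,5],![1,0,2,1],![7,8,8,7],![3,4,4,5],![7,8,8,9]]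
lemma phi15_lip : ∀ a b, (laaksoGraph 2).Adj a b → |phi15 a - phi15 b| ≤ 1 :=
  lip_of_edges phi15 (by decide)

def phi16 : (laaksoPre 2).V → ℤ :=
  mkPhi ![6,10] ![2,6,2,6] ![![5,4,4,3],![3,4,4,5],![1,2,0,1],![7,8,8,7],![3,4,4,5],![7,8,8,9]]
lemma phi16_lip : ∀ a b, (laaksoGraph 2).Adj a b → |phi16 a - phi16 b| ≤ 1 :=
  lip_of_edges phi16 (by decide)

def phi19 : (laaksoPre 2).V → ℤ :=
  mkPhi ![10,6] ![6,2,6,2] ![![9,8,8,7],![5,4,4,3],![7,8,8,7],![1,0,2,1],![5,4,4,3],![3,4,4,5]]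
lemma phi19_lip : ∀ a b, (laaksoGraph 2).Adj a b → |phi19 a - phi19 b| ≤ 1 :=
  lip_of_edges phi19 (by decide)

def phi23 : (laaksoPre 2).V → ℤ :=
  mkPhi ![10,6] ![6,6,2,2] ![![9,8,8,7],![7,8,8,7],![5,4,4,3],![5,4,4,3],![1,0,2,1],![3,4,4,5]]
lemma phi23_lip : ∀ a b, (laaksoGraph 2).Adj a b → |phi23 a - phi23 b| ≤ 1 :=
  lip_of_edges phi23 (by decide)

def wk11_12 : (laaksoGraph 2).Walk w11 w12 :=
  .cons (v := w10) (by decide) (.cons (v := w12) (by decide) .nil)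

def wk15_16 : (laaksoGraph 2).Walk w15 w16 :=
  .cons (v := w14) (by decide) (.cons (v := w16) (by decide) .nil)

def wk19_20 : (laaksoGraph 2).Walk w19 w20 :=
  .cons (v := w21) (by decide) (.cons (v := w20) (by decide) .nil)

def wk23_24 : (laaksoGraph 2).Walk w23 w24 :=
  .cons (v := w22) (by decide) (.cons (v := w24) (by decide) .nil)

def wk11_23 : (laaksoGraph 2).Walk w11 w23 :=
  .cons (v := w13) (by decide) (.cons (v := w3) (by decide) (.cons (v := w18) (by decide) (.cons (v := w19) (by decide) (.cons (v := w21) (by decide) (.cons (v := w5) (by decide) (.cons (v := w25) (by decide) (.cons (v := w23) (by decide) .nil)))))))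

def wk11_24 : (laaksoGraph 2).Walk w11 w24 :=
  .cons (v := w13) (by decide) (.cons (v := w3) (by decide) (.cons (v := w18) (by decide) (.cons (v := w19) (by decide) (.cons (v := w21) (by decide) (.cons (v := w5) (by decide) (.cons (v := w25) (by decide) (.cons (v := w24) (by decide) .nil)))))))

def wk12_23 : (laaksoGraph 2).Walk w12 w23 :=
  .cons (v := w13) (by decide) (.cons (v := w3) (by decide) (.cons (v := w18) (by decide) (.cons (v := w19) (by decide) (.cons (v := w21) (by decide) (.cons (v := w5) (by decide) (.cons (v := w25) (by decide) (.cons (v := w23) (by decide) .nil)))))))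

def wk12_24 : (laaksoGraph 2).Walk w12 w24 :=
  .cons (v := w13) (by decide) (.cons (v := w3) (by decide) (.cons (v := w18) (by decide) (.cons (v := w19) (by decide) (.cons (v := w21) (by decide) (.cons (v := w5) (by decide) (.cons (v := w25) (by decide) (.cons (v := w24) (by decide) .nil)))))))

def wk15_19 : (laaksoGraph 2).Walk w15 w19 :=
  .cons (v := w14) (by decide) (.cons (v := w2) (by decide) (.cons (v := w10) (by decide) (.cons (v := w11) (by decide) (.cons (v := w13) (by decide) (.cons (v := w3) (by decide) (.cons (v := w18) (by decide) (.cons (v := w19) (by decide) .nil)))))))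

def wk15_20 : (laaksoGraph 2).Walk w15 w20 :=
  .cons (v := w14) (by decide) (.cons (v := w2) (by decide) (.cons (v := w10) (by decide) (.cons (v := w11) (by decide) (.cons (v := w13) (by decide) (.cons (v := w3) (by decide) (.cons (v := w18) (by decide) (.cons (v := w20) (by decide) .nil)))))))

def wk16_19 : (laaksoGraph 2).Walk w16 w19 :=
  .cons (v := w14) (by decide) (.cons (v := w2) (by decide) (.cons (v := w10) (by decide) (.cons (v := w11) (by decide) (.cons (v := w13) (by decide) (.cons (v := w3) (by decide) (.cons (v := w18) (by decide) (.cons (v := w19) (by decide) .nil)))))))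

def wk16_20 : (laaksoGraph 2).Walk w16 w20 :=
  .cons (v := w14) (by decide) (.cons (v := w2) (by decide) (.cons (v := w10) (by decide) (.cons (v := w11) (by decide) (.cons (v := w13) (by decide) (.cons (v := w3) (by decide) (.cons (v := w18) (by decide) (.cons (v := w20) (by decide) .nil)))))))

def wk11_15 : (laaksoGraph 2).Walk w11 w15 :=
  .cons (v := w10) (by decide) (.cons (v := w2) (by decide) (.cons (v := w14) (by decide) (.cons (v := w15) (by decide) .nil)))

def wk11_16 : (laaksoGraph 2).Walk w11 w16 :=
  .cons (v := w10) (by decide) (.cons (v := w2) (by decide) (.cons (v := w14) (by decide) (.cons (v := w16) (by decide) .nil)))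

def wk12_15 : (laaksoGraph 2).Walk w12 w15 :=
  .cons (v := w10) (by decide) (.cons (v := w2) (by decide) (.cons (v := w14) (by decide) (.cons (v := w15) (by decide) .nil)))

def wk12_16 : (laaksoGraph 2).Walk w12 w16 :=
  .cons (v := w10) (by decide) (.cons (v := w2) (by decide) (.cons (v := w14) (by decide) (.cons (v := w16) (by decide) .nil)))

def wk19_23 : (laaksoGraph 2).Walk w19 w23 :=
  .cons (v := w21) (by decide) (.cons (v := w5) (by decide) (.cons (v := w25) (by decide) (.cons (v := w23) (by decide) .nil)))

def wk19_24 : (laaksoGraph 2).Walk w19 w24 :=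
  .cons (v := w21) (by decide) (.cons (v := w5) (by decide) (.cons (v := w25) (by decide) (.cons (v := w24) (by decide) .nil)))

def wk20_23 : (laaksoGraph 2).Walk w20 w23 :=
  .cons (v := w21) (by decide) (.cons (v := w5) (by decide) (.cons (v := w25) (by decide) (.cons (v := w23) (by decide) .nil)))

def wk20_24 : (laaksoGraph 2).Walk w20 w24 :=
  .cons (v := w21) (by decide) (.cons (v := w5) (by decide) (.cons (v := w25) (by decide) (.cons (v := w24) (by decide) .nil)))

def wk11_19 : (laaksoGraph 2).Walk w11 w19 :=
  .cons (v := w13) (by decide) (.cons (v := w3) (by decide) (.cons (v := w18) (by decide) (.cons (v := w19) (by decide) .nil)))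

def wk11_20 : (laaksoGraph 2).Walk w11 w20 :=
  .cons (v := w13) (by decide) (.cons (v := w3) (by decide) (.cons (v := w18) (by decide) (.cons (v := w20) (by decide) .nil)))

def wk12_19 : (laaksoGraph 2).Walk w12 w19 :=
  .cons (v := w13) (by decide) (.cons (v := w3) (by decide) (.cons (v := w18) (by decide) (.cons (v := w19) (by decide) .nil)))

def wk12_20 : (laaksoGraph 2).Walk w12 w20 :=
  .cons (v := w13) (by decide) (.cons (v := w3) (by decide) (.cons (v := w18) (by decide) (.cons (v := w20) (by decide) .nil)))

def wk15_23 : (laaksoGraph 2).Walk w15 w23 :=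
  .cons (v := w17) (by decide) (.cons (v := w4) (by decide) (.cons (v := w22) (by decide) (.cons (v := w23) (by decide) .nil)))

def wk15_24 : (laaksoGraph 2).Walk w15 w24 :=
  .cons (v := w17) (by decide) (.cons (v := w4) (by decide) (.cons (v := w22) (by decide) (.cons (v := w24) (by decide) .nil)))

def wk16_23 : (laaksoGraph 2).Walk w16 w23 :=
  .cons (v := w17) (by decide) (.cons (v := w4) (by decide) (.cons (v := w22) (by decide) (.cons (v := w23) (by decide) .nil)))

def wk16_24 : (laaksoGraph 2).Walk w16 w24 :=
  .cons (v := w17) (by decide) (.cons (v := w4) (by decide) (.cons (v := w22) (by decide) (.cons (v := w24) (by decide) .nil)))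

lemma low11_12 : (2:ℝ) ≤ laaksoDist 2 w11 w12 := by
  have h := dist_lower phi11 phi11_lip ⟨wk11_12⟩
  have e : |phi11 w11 - phi11 w12| = 2 := by decide
  rw [e] at h
  unfold laaksoDist
  exact_mod_cast h

lemma low15_16 : (2:ℝ) ≤ laaksoDist 2 w15 w16 := by
  have h := dist_lower phi15 phi15_lip ⟨wk15_16⟩
  have e : |phi15 w15 - phi15 w16| = 2 := by decide
  rw [e] at h
  unfold laaksoDist
  exact_mod_cast h

lemma low19_20 : (2:ℝ) ≤ laaksoDist 2 w19 w20 := by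
  have h := dist_lower phi19 phi19_lip ⟨wk19_20⟩
  have e : |phi19 w19 - phi19 w20| = 2 := by decide
  rw [e] at h
  unfold laaksoDist
  exact_mod_cast h

lemma low23_24 : (2:ℝ) ≤ laaksoDist 2 w23 w24 := by
  have h := dist_lower phi23 phi23_lip ⟨wk23_24⟩
  have e : |phi23 w23 - phi23 w24| = 2 := by decide
  rw [e] at h
  unfold laaksoDist
  exact_mod_cast h

lemma low11_23 : (8:ℝ) ≤ laaksoDist 2 w11 w23 := by
  have h := dist_lower phi11 phi11_lip ⟨wk11_23⟩
  have e : |phi11 w11 - phi11 w23| = 8 := by decide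
  rw [e] at h
  unfold laaksoDist
  exact_mod_cast h

lemma low11_24 : (8:ℝ) ≤ laaksoDist 2 w11 w24 := by
  have h := dist_lower phi11 phi11_lip ⟨wk11_24⟩
  have e : |phi11 w11 - phi11 w24| = 8 := by decide
  rw [e] at h
  unfold laaksoDist
  exact_mod_cast h

lemma low12_23 : (8:ℝ) ≤ laaksoDist 2 w12 w23 := by
  have h := dist_lower phi12 phi12_lip ⟨wk12_23⟩
  have e : |phi12 w12 - phi12 w23| = 8 := by decide
  rw [e] at h
  unfold laaksoDist
  exact_mod_cast h

lemma low12_24 : (8:ℝ) ≤ laaksoDist 2 w12 w24 := by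
  have h := dist_lower phi12 phi12_lip ⟨wk12_24⟩
  have e : |phi12 w12 - phi12 w24| = 8 := by decide
  rw [e] at h
  unfold laaksoDist
  exact_mod_cast h

lemma low15_19 : (8:ℝ) ≤ laaksoDist 2 w15 w19 := by
  have h := dist_lower phi15 phi15_lip ⟨wk15_19⟩
  have e : |phi15 w15 - phi15 w19| = 8 := by decide
  rw [e] at h
  unfold laaksoDist
  exact_mod_cast h

lemma low15_20 : (8:ℝ) ≤ laaksoDist 2 w15 w20 := by
  have h := dist_lower phi15 phi15_lip ⟨wk15_20⟩
  have e : |phi15 w15 - phi15 w20| = 8 := by decide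
  rw [e] at h
  unfold laaksoDist
  exact_mod_cast h

lemma low16_19 : (8:ℝ) ≤ laaksoDist 2 w16 w19 := by
  have h := dist_lower phi16 phi16_lip ⟨wk16_19⟩
  have e : |phi16 w16 - phi16 w19| = 8 := by decide
  rw [e] at h
  unfold laaksoDist
  exact_mod_cast h

lemma low16_20 : (8:ℝ) ≤ laaksoDist 2 w16 w20 := by
  have h := dist_lower phi16 phi16_lip ⟨wk16_20⟩
  have e : |phi16 w16 - phi16 w20| = 8 := by decide
  rw [e] at h
  unfold laaksoDist
  exact_mod_cast h

lemma upp11_15 : laaksoDist 2 w11 w15 ≤ 4 := by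
  have h := SimpleGraph.dist_le wk11_15
  have e : (wk11_15).length = 4 := by decide
  rw [e] at h
  unfold laaksoDist
  exact_mod_cast h

lemma upp11_16 : laaksoDist 2 w11 w16 ≤ 4 := by
  have h := SimpleGraph.dist_le wk11_16
  have e : (wk11_16).length = 4 := by decide
  rw [e] at h
  unfold laaksoDist
  exact_mod_cast h

lemma upp12_15 : laaksoDist 2 w12 w15 ≤ 4 := by
  have h := SimpleGraph.dist_le wk12_15
  have e : (wk12_15).length = 4 := by decide
  rw [e] at h
  unfold laaksoDist
  exact_mod_cast h

lemma upp12_16 : laaksoDist 2 w12 w16 ≤ 4 := by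
  have h := SimpleGraph.dist_le wk12_16
  have e : (wk12_16).length = 4 := by decide
  rw [e] at h
  unfold laaksoDist
  exact_mod_cast h

lemma upp19_23 : laaksoDist 2 w19 w23 ≤ 4 := by
  have h := SimpleGraph.dist_le wk19_23
  have e : (wk19_23).length = 4 := by decide
  rw [e] at h
  unfold laaksoDist
  exact_mod_cast h

lemma upp19_24 : laaksoDist 2 w19 w24 ≤ 4 := by
  have h := SimpleGraph.dist_le wk19_24
  have e : (wk19_24).length = 4 := by decide
  rw [e] at h
  unfold laaksoDist
  exact_mod_cast h

lemma upp20_23 : laaksoDist 2 w20 w23 ≤ 4 := by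
  have h := SimpleGraph.dist_le wk20_23
  have e : (wk20_23).length = 4 := by decide
  rw [e] at h
  unfold laaksoDist
  exact_mod_cast h

lemma upp20_24 : laaksoDist 2 w20 w24 ≤ 4 := by
  have h := SimpleGraph.dist_le wk20_24
  have e : (wk20_24).length = 4 := by decide
  rw [e] at h
  unfold laaksoDist
  exact_mod_cast h

lemma upp11_19 : laaksoDist 2 w11 w19 ≤ 4 := by
  have h := SimpleGraph.dist_le wk11_19
  have e : (wk11_19).length = 4 := by decide
  rw [e] at h
  unfold laaksoDist
  exact_mod_cast h

lemma upp11_20 : laaksoDist 2 w11 w20 ≤ 4 := by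
  have h := SimpleGraph.dist_le wk11_20
  have e : (wk11_20).length = 4 := by decide
  rw [e] at h
  unfold laaksoDist
  exact_mod_cast h

lemma upp12_19 : laaksoDist 2 w12 w19 ≤ 4 := by
  have h := SimpleGraph.dist_le wk12_19
  have e : (wk12_19).length = 4 := by decide
  rw [e] at h
  unfold laaksoDist
  exact_mod_cast h

lemma upp12_20 : laaksoDist 2 w12 w20 ≤ 4 := by
  have h := SimpleGraph.dist_le wk12_20
  have e : (wk12_20).length = 4 := by decide
  rw [e] at h
  unfold laaksoDist
  exact_mod_cast h

lemma upp15_23 : laaksoDist 2 w15 w23 ≤ 4 := by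
  have h := SimpleGraph.dist_le wk15_23
  have e : (wk15_23).length = 4 := by decide
  rw [e] at h
  unfold laaksoDist
  exact_mod_cast h

lemma upp15_24 : laaksoDist 2 w15 w24 ≤ 4 := by
  have h := SimpleGraph.dist_le wk15_24
  have e : (wk15_24).length = 4 := by decide
  rw [e] at h
  unfold laaksoDist
  exact_mod_cast h

lemma upp16_23 : laaksoDist 2 w16 w23 ≤ 4 := by
  have h := SimpleGraph.dist_le wk16_23
  have e : (wk16_23).length = 4 := by decide
  rw [e] at h
  unfold laaksoDist
  exact_mod_cast h

lemma upp16_24 : laaksoDist 2 w16 w24 ≤ 4 := by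
  have h := SimpleGraph.dist_le wk16_24
  have e : (wk16_24).length = 4 := by decide
  rw [e] at h
  unfold laaksoDist
  exact_mod_cast h

/-- **Theorem 3.** Any embedding of the Laakso graph `𝓛₂` into `L¹([0,1])` satisfying
`d(a,b) ≤ ‖f a − f b‖₁ ≤ c · d(a,b)` has `c ≥ 9/8`. -/
theorem laakso_stmt5 (f : (laaksoPre 2).V → Lp ℝ 1 μ01) (c : ℝ)
    (hf : ∀ a b : (laaksoPre 2).V,
      laaksoDist 2 a b ≤ ‖f a - f b‖ ∧ ‖f a - f b‖ ≤ c * laaksoDist 2 a b) :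
    c ≥ 9 / 8 := by
  have hc0 : 0 ≤ c := by
    have h1 := (hf w11 w12).1
    have h2 := (hf w11 w12).2
    have h3 := low11_12
    nlinarith [h1, h2, h3]
  have N := normIneq (f w11) (f w12) (f w15) (f w16) (f w19) (f w20) (f w23) (f w24)
  have L11_12 : (2:ℝ) ≤ ‖f w11 - f w12‖ := le_trans low11_12 (hf w11 w12).1
  have L15_16 : (2:ℝ) ≤ ‖f w15 - f w16‖ := le_trans low15_16 (hf w15 w16).1
  have L19_20 : (2:ℝ) ≤ ‖f w19 - f w20‖ := le_trans low19_20 (hf w19 w20).1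
  have L23_24 : (2:ℝ) ≤ ‖f w23 - f w24‖ := le_trans low23_24 (hf w23 w24).1
  have L11_23 : (8:ℝ) ≤ ‖f w11 - f w23‖ := le_trans low11_23 (hf w11 w23).1
  have L11_24 : (8:ℝ) ≤ ‖f w11 - f w24‖ := le_trans low11_24 (hf w11 w24).1
  have L12_23 : (8:ℝ) ≤ ‖f w12 - f w23‖ := le_trans low12_23 (hf w12 w23).1
  have L12_24 : (8:ℝ) ≤ ‖f w12 - f w24‖ := le_trans low12_24 (hf w12 w24).1
  have L15_19 : (8:ℝ) ≤ ‖f w15 - f w19‖ := le_trans low15_19 (hf w15 w19).1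
  have L15_20 : (8:ℝ) ≤ ‖f w15 - f w20‖ := le_trans low15_20 (hf w15 w20).1
  have L16_19 : (8:ℝ) ≤ ‖f w16 - f w19‖ := le_trans low16_19 (hf w16 w19).1
  have L16_20 : (8:ℝ) ≤ ‖f w16 - f w20‖ := le_trans low16_20 (hf w16 w20).1
  have S11_15 : ‖f w11 - f w15‖ ≤ c * 4 := by
    have hm := mul_le_mul_of_nonneg_left upp11_15 hc0
    linarith [(hf w11 w15).2, hm]
  have S11_16 : ‖f w11 - f w16‖ ≤ c * 4 := by
    have hm := mul_le_mul_of_nonneg_left upp11_16 hc0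
    linarith [(hf w11 w16).2, hm]
  have S12_15 : ‖f w12 - f w15‖ ≤ c * 4 := by
    have hm := mul_le_mul_of_nonneg_left upp12_15 hc0
    linarith [(hf w12 w15).2, hm]
  have S12_16 : ‖f w12 - f w16‖ ≤ c * 4 := by
    have hm := mul_le_mul_of_nonneg_left upp12_16 hc0
    linarith [(hf w12 w16).2, hm]
  have S19_23 : ‖f w19 - f w23‖ ≤ c * 4 := by
    have hm := mul_le_mul_of_nonneg_left upp19_23 hc0
    linarith [(hf w19 w23).2, hm]
  have S19_24 : ‖f w19 - f w24‖ ≤ c * 4 := by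
    have hm := mul_le_mul_of_nonneg_left upp19_24 hc0
    linarith [(hf w19 w24).2, hm]
  have S20_23 : ‖f w20 - f w23‖ ≤ c * 4 := by
    have hm := mul_le_mul_of_nonneg_left upp20_23 hc0
    linarith [(hf w20 w23).2, hm]
  have S20_24 : ‖f w20 - f w24‖ ≤ c * 4 := by
    have hm := mul_le_mul_of_nonneg_left upp20_24 hc0
    linarith [(hf w20 w24).2, hm]
  have S11_19 : ‖f w11 - f w19‖ ≤ c * 4 := by
    have hm := mul_le_mul_of_nonneg_left upp11_19 hc0
    linarith [(hf w11 w19).2, hm]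
  have S11_20 : ‖f w11 - f w20‖ ≤ c * 4 := by
    have hm := mul_le_mul_of_nonneg_left upp11_20 hc0
    linarith [(hf w11 w20).2, hm]
  have S12_19 : ‖f w12 - f w19‖ ≤ c * 4 := by
    have hm := mul_le_mul_of_nonneg_left upp12_19 hc0
    linarith [(hf w12 w19).2, hm]
  have S12_20 : ‖f w12 - f w20‖ ≤ c * 4 := by
    have hm := mul_le_mul_of_nonneg_left upp12_20 hc0
    linarith [(hf w12 w20).2, hm]
  have S15_23 : ‖f w15 - f w23‖ ≤ c * 4 := by
    have hm := mul_le_mul_of_nonneg_left upp15_23 hc0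
    linarith [(hf w15 w23).2, hm]
  have S15_24 : ‖f w15 - f w24‖ ≤ c * 4 := by
    have hm := mul_le_mul_of_nonneg_left upp15_24 hc0
    linarith [(hf w15 w24).2, hm]
  have S16_23 : ‖f w16 - f w23‖ ≤ c * 4 := by
    have hm := mul_le_mul_of_nonneg_left upp16_23 hc0
    linarith [(hf w16 w23).2, hm]
  have S16_24 : ‖f w16 - f w24‖ ≤ c * 4 := by
    have hm := mul_le_mul_of_nonneg_left upp16_24 hc0
    linarith [(hf w16 w24).2, hm]
  linarith [N]
end
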